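/- arXiv:1709.05539 — 10 statements merged into one kernel-verified Lean document; each statement's English description precedes it below -/
import Mathlib

section
/- Let G be a homocyclic finite abelian group of exponent m ∈ {2, 3, 4} and rank n (that is, G ≅ C_m^n). Let S ⊆ G be a generating subset, let A ⊆ G be non-empty, and let γ ∈ (0,1] be real. If ∂_S(A) ≤ (1-γ)·n·|A|, then |A| ≥ |G|^γ. -/
/-!
Transport everything to `(ZMod m)^n`. Since `ZMod m` is a local ring for `m ∈ {2, 3, 4}`, the
generating set `S` contains a basis (Nakayama), and after an automorphism this basis is the
standard one; shrinking `S` only shrinks the boundary. For the standard generators,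
`∂(A) ≥ |A| (n - log_m |A|)` by induction on `n`: cutting `A` into the layers `A_j` over the first
coordinate, the boundary is the sum of the boundaries of the layers plus the edges between
consecutive layers, and the latter are at least `max |A_j| - min |A_j|`. The inductive step is
then the entropy inequality `H(p) ≥ (1 - max p + min p) log m` for probability vectors on `m ≤ 4`
points, which follows from `exp (-H(p)) ≤ ∑ pᵢ²` (Jensen) and the elementary bound
`∑ pᵢ² ≤ m ^ (max p - min p - 1)`. Finally `∂_S(A) ≤ (1 - γ) n |A|` forces `log_m |A| ≥ γ n`.
-/

/-- The edge boundary of `A` with respect to `S`: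
`∂_S(A) = |{(a,s) ∈ A × S : a + s ∉ A}|`. -/
def edgeBoundary {G : Type*} [AddCommGroup G] [DecidableEq G] (A S : Finset G) : ℕ :=
  ((A ×ˢ S).filter (fun p => p.1 + p.2 ∉ A)).card

open Finset Real

theorem exp_tangent_le (x₀ x : ℝ) : exp x₀ * (1 + (x - x₀)) ≤ exp x := by
  calc exp x₀ * (1 + (x - x₀)) ≤ exp x₀ * exp (x - x₀) := by
        gcongr; linarith [add_one_le_exp (x - x₀)]
    _ = exp x := by rw [← exp_add, add_sub_cancel]

theorem exp_neg_log {b : ℝ} (hb : 0 < b) : exp (-log b) = b⁻¹ := by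
  rw [exp_neg, exp_log hb]

theorem le_exp_neg_log_div_two {b c : ℝ} (hb : 0 < b) (hc : c ^ 2 * b ≤ 1) :
    c ≤ exp (-log b / 2) := by
  have hsq : exp (-log b / 2) ^ 2 = b⁻¹ := by
    rw [← exp_nat_mul, ← exp_neg_log hb]; ring_nf
  have : c ^ 2 ≤ exp (-log b / 2) ^ 2 := by
    rwa [hsq, ← one_div, le_div_iff₀ hb]
  exact abs_le_of_sq_le_sq' this (exp_pos _).le |>.2

/- In the one-variable bounds, on each piece of a case split a tangent line of `exp`, at a point
where `exp` is known, lies between the two sides. -/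
theorem sq_add_sq_le_exp_log_two {x y : ℝ} (hy : 0 ≤ y) (hyx : y ≤ x) (hs : x + y = 1) :
    x ^ 2 + y ^ 2 ≤ exp ((x - y - 1) * log 2) := by
  have l2a := log_two_gt_d9; have l2b := log_two_lt_d9
  rw [show (x - y - 1) * log 2 = (2 * x - 2) * log 2 by linear_combination (-log 2) * hs]
  rcases le_or_gt x 0.8 with hc | hc
  · have t := exp_tangent_le (-log 2) ((2 * x - 2) * log 2)
    rw [exp_neg_log two_pos] at t
    nlinarith
  · have t := exp_tangent_le 0 ((2 * x - 2) * log 2)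
    rw [exp_zero] at t
    nlinarith

theorem sq_add_two_mul_sq_le_exp_log_three {x y : ℝ} (hy : 0 ≤ y) (hyx : y ≤ x)
    (hs : x + 2 * y = 1) : x ^ 2 + 2 * y ^ 2 ≤ exp ((x - y - 1) * log 3) := by
  have l3a := log_three_gt_d9; have l3b := log_three_lt_d9
  rw [show (x - y - 1) * log 3 = (-3 * y) * log 3 by linear_combination (log 3) * hs]
  rcases le_or_gt y 0.08 with hc | hc
  · have t := exp_tangent_le 0 ((-3 * y) * log 3)
    rw [exp_zero] at t
    nlinarith
  rcases le_or_gt y 0.25 with hc2 | hc2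
  · have t := exp_tangent_le (-log 3 / 2) ((-3 * y) * log 3)
    have hr := le_exp_neg_log_div_two (c := 0.5773) three_pos (by norm_num)
    have hfac : (0:ℝ) ≤ 1 + ((-3 * y) * log 3 - (-log 3 / 2)) := by nlinarith
    have t2 := (mul_le_mul_of_nonneg_right hr hfac).trans t
    nlinarith
  · have t := exp_tangent_le (-log 3) ((-3 * y) * log 3)
    rw [exp_neg_log three_pos] at t
    nlinarith

theorem two_mul_sq_add_sq_le_exp_log_three {x y : ℝ} (hy : 0 ≤ y) (hyx : y ≤ x)
    (hs : 2 * x + y = 1) : 2 * x ^ 2 + y ^ 2 ≤ exp ((x - y - 1) * log 3) := by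
  have l3a := log_three_gt_d9; have l3b := log_three_lt_d9
  rw [show (x - y - 1) * log 3 = (3 * x - 2) * log 3 by linear_combination (-log 3) * hs]
  have t := exp_tangent_le (-log 3) ((3 * x - 2) * log 3)
  rw [exp_neg_log three_pos] at t
  nlinarith

theorem sq_add_sq_le_exp_log_three {x y : ℝ} (hy : 0 ≤ y) (hyx : y ≤ x) (hs : x + y = 1) :
    x ^ 2 + y ^ 2 ≤ exp ((x - 1) * log 3) := by
  have l3a := log_three_gt_d9; have l3b := log_three_lt_d9
  rcases le_or_gt x 0.7 with hc | hc
  · have t := exp_tangent_le (-log 3 / 2) ((x - 1) * log 3)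
    have hr := le_exp_neg_log_div_two (c := 0.5773) three_pos (by norm_num)
    have hfac : (0:ℝ) ≤ 1 + ((x - 1) * log 3 - (-log 3 / 2)) := by nlinarith
    have t2 := (mul_le_mul_of_nonneg_right hr hfac).trans t
    nlinarith
  · have t := exp_tangent_le 0 ((x - 1) * log 3)
    rw [exp_zero] at t
    nlinarith

theorem sq_add_three_mul_sq_le_exp_log_four {x y : ℝ} (hy : 0 ≤ y) (hyx : y ≤ x)
    (hs : x + 3 * y = 1) : x ^ 2 + 3 * y ^ 2 ≤ exp ((x - y - 1) * log 4) := by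
  have l2a := log_two_gt_d9; have l2b := log_two_lt_d9
  obtain rfl : x = 1 - 3 * y := by linarith
  rw [show (1 - 3 * y - y - 1) * log 4 = (-8 * y) * log 2 by rw [log_four_eq]; ring]
  rcases le_or_gt y (1/30) with hc | hc
  · have t := exp_tangent_le 0 ((-8 * y) * log 2)
    rw [exp_zero] at t
    nlinarith
  rcases le_or_gt y (1/10) with hc2 | hc2
  · have t := exp_tangent_le (-log 2 / 2) ((-8 * y) * log 2)
    have hr := le_exp_neg_log_div_two (c := 0.7071) two_pos (by norm_num)
    have hfac : (0:ℝ) ≤ 1 + ((-8 * y) * log 2 - (-log 2 / 2)) := by nlinarith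
    have t2 := (mul_le_mul_of_nonneg_right hr hfac).trans t
    nlinarith
  rcases le_or_gt y 0.1834 with hc3 | hc3
  · have t := exp_tangent_le (-log 2) ((-8 * y) * log 2)
    rw [exp_neg_log two_pos] at t
    nlinarith
  · have t := exp_tangent_le (-log 4) ((-8 * y) * log 2)
    rw [exp_neg_log four_pos, log_four_eq] at t
    nlinarith

theorem two_mul_sq_add_two_mul_sq_le_exp_log_four {x y : ℝ} (hy : 0 ≤ y) (hyx : y ≤ x)
    (hs : 2 * x + 2 * y = 1) : 2 * x ^ 2 + 2 * y ^ 2 ≤ exp ((x - y - 1) * log 4) := by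
  have l2a := log_two_gt_d9; have l2b := log_two_lt_d9
  rw [show (x - y - 1) * log 4 = (4 * x - 3) * log 2 by
    rw [log_four_eq]; linear_combination (-log 2) * hs]
  rcases le_or_gt x 0.37 with hc | hc
  · have t := exp_tangent_le (-log 4) ((4 * x - 3) * log 2)
    rw [exp_neg_log four_pos, log_four_eq] at t
    nlinarith
  · have t := exp_tangent_le (-log 2) ((4 * x - 3) * log 2)
    rw [exp_neg_log two_pos] at t
    nlinarith

theorem three_mul_sq_add_sq_le_exp_log_four {x y : ℝ} (hy : 0 ≤ y) (hyx : y ≤ x)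
    (hs : 3 * x + y = 1) : 3 * x ^ 2 + y ^ 2 ≤ exp ((x - y - 1) * log 4) := by
  have l2a := log_two_gt_d9; have l2b := log_two_lt_d9
  rw [show (x - y - 1) * log 4 = (8 * x - 4) * log 2 by
    rw [log_four_eq]; linear_combination (-2 * log 2) * hs]
  have t := exp_tangent_le (-log 4) ((8 * x - 4) * log 2)
  rw [exp_neg_log four_pos, log_four_eq] at t
  nlinarith

theorem sq_add_sq_le_exp_log_four {x y : ℝ} (hy : 0 ≤ y) (hyx : y ≤ x) (hs : x + y = 1) :
    x ^ 2 + y ^ 2 ≤ exp ((x - 1) * log 4) := by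
  rw [show (x - 1) * log 4 = (x - y - 1) * log 2 by
    rw [log_four_eq]; linear_combination (log 2) * hs]
  exact sq_add_sq_le_exp_log_two hy hyx hs

theorem two_mul_sq_add_sq_le_exp_log_four {x y : ℝ} (hy : 0 ≤ y) (hyx : y ≤ x)
    (hs : 2 * x + y = 1) : 2 * x ^ 2 + y ^ 2 ≤ exp ((x - 1) * log 4) := by
  have l2a := log_two_gt_d9; have l2b := log_two_lt_d9
  rw [log_four_eq]
  have t := exp_tangent_le (-log 2) ((x - 1) * (2 * log 2))
  rw [exp_neg_log two_pos] at t
  nlinarith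

/- Along the segment that keeps `a - c` and `a + b + c` fixed, the left side is a convex quadratic
and the right side is constant, so it suffices to check the endpoints, where `b` meets `a` or `c`,
or `c` vanishes. The two four-variable bounds below are proved in the same way. -/
theorem sum_three_sq_le_exp_log_three {a b c : ℝ} (hc : 0 ≤ c) (hcb : c ≤ b) (hba : b ≤ a)
    (hs : a + b + c = 1) : a ^ 2 + b ^ 2 + c ^ 2 ≤ exp ((a - c - 1) * log 3) := by
  have hq1 := sq_add_two_mul_sq_le_exp_log_three (x := (3 * a + b - c) / 3) (y := (b + 2 * c) / 3)
    (by linarith) (by linarith) (by linarith)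
  rw [show (3 * a + b - c) / 3 - (b + 2 * c) / 3 - 1 = a - c - 1 by ring] at hq1
  rcases (hcb.trans hba).eq_or_lt with hca | hca
  · nlinarith [hq1]
  rcases le_or_gt a (b + 3 * c) with hcase | hcase
  · have hq0 := two_mul_sq_add_sq_le_exp_log_three (x := (2 * a + b) / 3)
      (y := (b + 3 * c - a) / 3) (by linarith) (by linarith) (by linarith)
    rw [show (2 * a + b) / 3 - (b + 3 * c - a) / 3 - 1 = a - c - 1 by ring] at hq0
    nlinarith [mul_nonneg (sub_nonneg.2 hcb) (sub_nonneg.2 hq0),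
      mul_nonneg (sub_nonneg.2 hba) (sub_nonneg.2 hq1),
      mul_nonneg (mul_nonneg (sub_nonneg.2 hba) (sub_nonneg.2 hcb)) (sub_nonneg.2 hca.le)]
  · have hq0 := sq_add_sq_le_exp_log_three (x := a - c) (y := b + 2 * c)
      (by linarith) (by linarith) (by linarith)
    nlinarith [mul_nonneg (sub_nonneg.2 hcb) (sub_nonneg.2 hq0),
      mul_nonneg (show (0:ℝ) ≤ 3 * c by linarith) (sub_nonneg.2 hq1),
      mul_nonneg (mul_nonneg hc (sub_nonneg.2 hcb)) (show (0:ℝ) ≤ b + 2 * c by linarith)]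

theorem two_mul_sq_add_sq_add_sq_le_exp_log_four {a z d : ℝ} (hd : 0 ≤ d) (hdz : d ≤ z)
    (hza : z ≤ a) (hs : 2 * a + z + d = 1) :
    2 * a ^ 2 + z ^ 2 + d ^ 2 ≤ exp ((a - d - 1) * log 4) := by
  have hq1 := two_mul_sq_add_two_mul_sq_le_exp_log_four (x := (4 * a + z - d) / 4)
    (y := (z + 3 * d) / 4) (by linarith) (by linarith) (by linarith)
  rw [show (4 * a + z - d) / 4 - (z + 3 * d) / 4 - 1 = a - d - 1 by ring] at hq1
  rcases (hdz.trans hza).eq_or_lt with had | had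
  · nlinarith [hq1]
  rcases le_or_gt a (z + 4 * d) with hcase | hcase
  · have hq0 := three_mul_sq_add_sq_le_exp_log_four (x := (3 * a + z) / 4)
      (y := (4 * d + z - a) / 4) (by linarith) (by linarith) (by linarith)
    rw [show (3 * a + z) / 4 - (4 * d + z - a) / 4 - 1 = a - d - 1 by ring] at hq0
    nlinarith [mul_nonneg (sub_nonneg.2 hdz) (sub_nonneg.2 hq0),
      mul_nonneg (sub_nonneg.2 hza) (sub_nonneg.2 hq1),
      mul_nonneg (mul_nonneg (sub_nonneg.2 hza) (sub_nonneg.2 hdz)) (sub_nonneg.2 had.le)]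
  · have hq0 := two_mul_sq_add_sq_le_exp_log_four (x := a - d) (y := z + 3 * d)
      (by linarith) (by linarith) (by linarith)
    nlinarith [mul_nonneg (sub_nonneg.2 hdz) (sub_nonneg.2 hq0),
      mul_nonneg hd (sub_nonneg.2 hq1),
      mul_nonneg (mul_nonneg hd (sub_nonneg.2 hdz)) (show (0:ℝ) ≤ z + 3 * d by linarith)]

theorem sq_add_sq_add_two_mul_sq_le_exp_log_four {a w d : ℝ} (hd : 0 ≤ d) (hdw : d ≤ w)
    (hwa : w ≤ a) (hs : a + w + 2 * d = 1) :
    a ^ 2 + w ^ 2 + 2 * d ^ 2 ≤ exp ((a - d - 1) * log 4) := by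
  have hq1 := sq_add_three_mul_sq_le_exp_log_four (x := (4 * a + w - d) / 4)
    (y := (w + 3 * d) / 4) (by linarith) (by linarith) (by linarith)
  rw [show (4 * a + w - d) / 4 - (w + 3 * d) / 4 - 1 = a - d - 1 by ring] at hq1
  rcases (hdw.trans hwa).eq_or_lt with had | had
  · nlinarith [hq1]
  rcases le_or_gt a (w + 4 * d) with hcase | hcase
  · have hq0 := two_mul_sq_add_two_mul_sq_le_exp_log_four (x := (3 * a + w) / 4)
      (y := (4 * d + w - a) / 4) (by linarith) (by linarith) (by linarith)
    rw [show (3 * a + w) / 4 - (4 * d + w - a) / 4 - 1 = a - d - 1 by ring] at hq0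
    nlinarith [mul_nonneg (sub_nonneg.2 hdw) (sub_nonneg.2 hq0),
      mul_nonneg (sub_nonneg.2 hwa) (sub_nonneg.2 hq1),
      mul_nonneg (mul_nonneg (sub_nonneg.2 hwa) (sub_nonneg.2 hdw)) (sub_nonneg.2 had.le)]
  · have hq0 := sq_add_sq_le_exp_log_four (x := a - d) (y := w + 3 * d)
      (by linarith) (by linarith) (by linarith)
    rcases hd.eq_or_lt with hd0 | hd0
    · subst hd0
      nlinarith [hq0]
    · nlinarith [mul_nonneg (sub_nonneg.2 hdw) (sub_nonneg.2 hq0),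
        mul_nonneg hd (sub_nonneg.2 hq1),
        mul_nonneg (mul_nonneg hd (sub_nonneg.2 hdw)) (show (0:ℝ) ≤ w + 3 * d by linarith)]

/- Spreading `b` and `c` apart with `b + c` fixed only increases the left side. -/
theorem sum_four_sq_le_exp_log_four {a b c d : ℝ} (hd : 0 ≤ d) (hdb : d ≤ b) (hdc : d ≤ c)
    (hba : b ≤ a) (hca : c ≤ a) (hs : a + b + c + d = 1) :
    a ^ 2 + b ^ 2 + c ^ 2 + d ^ 2 ≤ exp ((a - d - 1) * log 4) := by
  rcases le_or_gt (a + d) (b + c) with hcase | hcase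
  · have h := two_mul_sq_add_sq_add_sq_le_exp_log_four (a := a) (z := b + c - a) (d := d)
      hd (by linarith) (by linarith) (by linarith)
    nlinarith [mul_nonneg (sub_nonneg.2 hba) (sub_nonneg.2 hca)]
  · have h := sq_add_sq_add_two_mul_sq_le_exp_log_four (a := a) (w := b + c - d) (d := d)
      hd (by linarith) (by linarith) (by linarith)
    nlinarith [mul_nonneg (sub_nonneg.2 hdb) (sub_nonneg.2 hdc)]

theorem sum_sq_le_exp {ι : Type*} [Fintype ι] {m : ℕ} (hm : m = 2 ∨ m = 3 ∨ m = 4)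
    (hcard : Fintype.card ι = m) (p : ι → ℝ) (hp : ∀ i, 0 ≤ p i) (hsum : ∑ i, p i = 1)
    (i₀ i₁ : ι) (hmax : ∀ i, p i ≤ p i₀) (hmin : ∀ i, p i₁ ≤ p i) :
    ∑ i, p i ^ 2 ≤ exp ((p i₀ - p i₁ - 1) * log m) := by
  classical
  obtain ⟨i₂, hne, hval, hmin⟩ : ∃ i₂, i₂ ≠ i₀ ∧ p i₂ = p i₁ ∧ ∀ i, p i₂ ≤ p i := by
    by_cases h : i₁ = i₀
    · obtain ⟨j, hj⟩ := Fintype.exists_ne_of_one_lt_card (by omega) i₀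
      have hv : p j = p i₁ := le_antisymm (h ▸ hmax j) (hmin j)
      exact ⟨j, hj, hv, hv ▸ hmin⟩
    · exact ⟨i₁, h, rfl, hmin⟩
  rw [← hval]
  set R := (univ.erase i₀).erase i₂
  have hR : #R = m - 2 := by simp [R, card_erase_of_mem, hne, hcard]; omega
  have hsplit : ∀ f : ι → ℝ, ∑ i, f i = f i₀ + f i₂ + ∑ i ∈ R, f i := fun f => by
    rw [← add_sum_erase _ _ (mem_univ i₀), ← add_sum_erase _ _ (mem_erase.2 ⟨hne, mem_univ i₂⟩),
      add_assoc]
  rw [hsplit] at hsum ⊢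
  rcases hm with rfl | rfl | rfl
  · rw [card_eq_zero.1 hR, sum_empty, add_zero] at hsum ⊢
    simpa using sq_add_sq_le_exp_log_two (hp i₂) (hmin i₀) hsum
  · obtain ⟨j, hj⟩ := card_eq_one.1 hR
    rw [hj, sum_singleton] at hsum ⊢
    have := sum_three_sq_le_exp_log_three (hp i₂) (hmin j) (hmax j) (by linarith)
    push_cast
    linarith
  · obtain ⟨j, k, hjk, hR⟩ := card_eq_two.1 hR
    rw [hR, sum_pair hjk] at hsum ⊢
    have := sum_four_sq_le_exp_log_four (hp i₂) (hmin j) (hmin k) (hmax j) (hmax k) (by linarith)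
    push_cast
    linarith

theorem exp_neg_sum_negMulLog_le_sum_sq {ι : Type*} [Fintype ι] (p : ι → ℝ) (hp : ∀ i, 0 ≤ p i)
    (hsum : ∑ i, p i = 1) : exp (-∑ i, negMulLog (p i)) ≤ ∑ i, p i ^ 2 := by
  have hself : ∀ i, exp (-negMulLog (p i)) = p i ^ p i := fun i => by
    rcases (hp i).eq_or_lt with h | h
    · simp [← h]
    · rw [rpow_def_of_pos h, negMulLog]; ring_nf
  calc exp (-∑ i, negMulLog (p i)) = ∏ i, p i ^ p i := by
        rw [← sum_neg_distrib, exp_sum]; exact prod_congr rfl fun i _ => hself i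
    _ ≤ ∑ i, p i * p i :=
        geom_mean_le_arith_mean_weighted _ _ _ (fun i _ => hp i) hsum fun i _ => hp i
    _ = ∑ i, p i ^ 2 := by simp only [sq]

theorem mul_log_le_sum_negMulLog {ι : Type*} [Fintype ι] {m : ℕ} (hm : m = 2 ∨ m = 3 ∨ m = 4)
    (hcard : Fintype.card ι = m) (p : ι → ℝ) (hp : ∀ i, 0 ≤ p i) (hsum : ∑ i, p i = 1)
    (i₀ i₁ : ι) (hmax : ∀ i, p i ≤ p i₀) (hmin : ∀ i, p i₁ ≤ p i) :
    (1 - p i₀ + p i₁) * log m ≤ ∑ i, negMulLog (p i) := by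
  have h := (exp_neg_sum_negMulLog_le_sum_sq p hp hsum).trans
    (sum_sq_le_exp hm hcard p hp hsum i₀ i₁ hmax hmin)
  linarith [exp_le_exp.1 h]

theorem add_one_sub_logb_sum_mul_sum_le {ι : Type*} [Fintype ι] {m : ℕ} (hm : m = 2 ∨ m = 3 ∨ m = 4)
    (hcard : Fintype.card ι = m) (a : ι → ℝ) (ha : ∀ i, 0 ≤ a i) (hT : 0 < ∑ i, a i)
    (i₀ i₁ : ι) (hmax : ∀ i, a i ≤ a i₀) (hmin : ∀ i, a i₁ ≤ a i) (n : ℝ) :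
    (n + 1 - logb m (∑ i, a i)) * ∑ i, a i
      ≤ ∑ i, (n - logb m (a i)) * a i + (a i₀ - a i₁) := by
  -- the entropy bound for `p = a / T`, scaled by `T / log m`
  set T := ∑ i, a i
  set p := fun i => a i / T
  have hpT : ∀ i, a i = T * p i := fun i => (mul_div_cancel₀ _ hT.ne').symm
  have hpsum : ∑ i, p i = 1 := by rw [← sum_div, div_self hT.ne']
  have hentropy := mul_log_le_sum_negMulLog hm hcard p (fun i => div_nonneg (ha i) hT.le) hpsum
    i₀ i₁ (fun i => div_le_div_of_nonneg_right (hmax i) hT.le)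
    (fun i => div_le_div_of_nonneg_right (hmin i) hT.le)
  have hsplit : ∑ i, negMulLog (a i) = negMulLog T + T * ∑ i, negMulLog (p i) := by
    calc ∑ i, negMulLog (a i) = ∑ i, (p i * negMulLog T + T * negMulLog (p i)) :=
          sum_congr rfl fun i _ => by rw [hpT i, negMulLog_mul]
      _ = _ := by rw [sum_add_distrib, ← sum_mul, hpsum, one_mul, ← mul_sum]
  have hlog : 0 < log m := log_pos (by rcases hm with rfl | rfl | rfl <;> norm_num)
  have hterm : ∀ c x, (c - logb m x) * x = c * x + negMulLog x / log m := fun c x => by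
    rw [negMulLog, logb]; ring
  have hentropy' := mul_le_mul_of_nonneg_left ((le_div_iff₀ hlog).2 hentropy) hT.le
  simp_rw [hterm]
  rw [sum_add_distrib, ← mul_sum, ← sum_div, hsplit, hpT i₀, hpT i₁, add_div, mul_div_assoc]
  linarith

section EdgeBoundary

variable {G H : Type*} [AddCommGroup G] [DecidableEq G] [AddCommGroup H] [DecidableEq H]

theorem edgeBoundary_eq_sum (A S : Finset G) :
    edgeBoundary A S = ∑ s ∈ S, #{a ∈ A | a + s ∉ A} := by
  rw [edgeBoundary, card_eq_sum_card_fiberwise (f := Prod.snd) (t := S)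
    fun p hp => (mem_product.1 (mem_filter.1 hp).1).2]
  refine sum_congr rfl fun s hs => card_nbij' Prod.fst (·, s) ?_ ?_ ?_ ?_ <;> intro x hx <;> aesop

theorem edgeBoundary_mono (A : Finset G) {S S' : Finset G} (h : S' ⊆ S) :
    edgeBoundary A S' ≤ edgeBoundary A S :=
  card_le_card (filter_subset_filter _ (product_subset_product_right h))

theorem edgeBoundary_image_addEquiv (φ : G ≃+ H) (A S : Finset G) :
    edgeBoundary (A.image φ) (S.image φ) = edgeBoundary A S := by
  rw [edgeBoundary_eq_sum, edgeBoundary_eq_sum, sum_image φ.injective.injOn]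
  refine sum_congr rfl fun s _ => ?_
  rw [filter_image, card_image_of_injective _ φ.injective]
  simp only [← map_add, φ.injective.mem_finset_image]

end EdgeBoundary

section Layer

variable {K G : Type*}

noncomputable def layer (A : Finset (K × G)) (k : K) : Finset G :=
  A.preimage (Prod.mk k) (Prod.mk_right_injective k).injOn

@[simp]
theorem mem_layer {A : Finset (K × G)} {k : K} {x : G} : x ∈ layer A k ↔ (k, x) ∈ A :=
  mem_preimage

variable [Fintype K] [DecidableEq K]

theorem card_filter_eq_sum_card_filter_layer (A : Finset (K × G)) (P : K × G → Prop)
    [DecidablePred P] : #(A.filter P) = ∑ k, #((layer A k).filter fun x => P (k, x)) := by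
  rw [card_eq_sum_card_fiberwise (f := Prod.fst) (t := univ) fun _ _ => mem_univ _]
  refine sum_congr rfl fun k _ => card_nbij' Prod.snd (k, ·) ?_ ?_ ?_ ?_ <;> intro x hx <;> aesop

theorem card_eq_sum_card_layer (A : Finset (K × G)) : #A = ∑ k, #(layer A k) := by
  simpa using card_filter_eq_sum_card_filter_layer A fun _ => True

end Layer

section EdgeBoundaryProd

variable {K G : Type*} [AddCommGroup K] [Fintype K] [DecidableEq K] [AddCommGroup G] [DecidableEq G]

theorem edgeBoundary_prod {t : K} (ht : t ≠ 0) (A : Finset (K × G)) (S : Finset G) :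
    edgeBoundary A (insert (t, 0) (S.image ((0 : K), ·)))
      = ∑ k, edgeBoundary (layer A k) S + ∑ k, #(layer A k \ layer A (k + t)) := by
  have hnotMem : ((t, 0) : K × G) ∉ S.image ((0 : K), ·) := by simp [ht.symm]
  rw [edgeBoundary_eq_sum, sum_insert hnotMem, sum_image fun _ _ _ _ h => congrArg Prod.snd h,
    add_comm]
  congr 1
  · simp_rw [card_filter_eq_sum_card_filter_layer, edgeBoundary_eq_sum]
    rw [sum_comm]
    simp
  · rw [card_filter_eq_sum_card_filter_layer]
    simp [sdiff_eq_filter]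

end EdgeBoundaryProd

theorem card_le_card_add_sum_card_sdiff {m : ℕ} [NeZero m] {G : Type*} [DecidableEq G]
    (B : ZMod m → Finset G) (j₀ j₁ : ZMod m) :
    #(B j₀) ≤ #(B j₁) + ∑ j, #(B j \ B (j + 1)) := by
  have chain : ∀ l : ℕ,
      #(B j₀) ≤ #(B (j₀ + l)) + ∑ t ∈ range l, #(B (j₀ + t) \ B (j₀ + t + 1)) := by
    intro l
    induction l with
    | zero => simp
    | succ l ih =>
      rw [sum_range_succ, Nat.cast_succ, ← add_assoc j₀]
      have := card_le_card_sdiff_add_card (s := B (j₀ + l)) (t := B (j₀ + l + 1))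
      omega
  set l := (j₁ - j₀).val
  have hinj : Set.InjOn (fun t : ℕ => j₀ + t) (range l) := by
    intro x hx y hy hxy
    have hl : l < m := ZMod.val_lt _
    simpa [Nat.mod_eq_of_lt ((mem_range.1 hx).trans hl),
      Nat.mod_eq_of_lt ((mem_range.1 hy).trans hl)]
      using congrArg ZMod.val (add_left_cancel hxy)
  calc #(B j₀) ≤ #(B (j₀ + l)) + ∑ t ∈ range l, #(B (j₀ + t) \ B (j₀ + t + 1)) := chain l
    _ = #(B j₁) + ∑ j ∈ (range l).image fun t : ℕ => j₀ + t, #(B j \ B (j + 1)) := by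
        rw [sum_image hinj, ZMod.natCast_zmod_val, add_sub_cancel]
    _ ≤ _ := by gcongr; exact subset_univ _

def unitVectors (R : Type*) [Semiring R] [DecidableEq R] (n : ℕ) : Finset (Fin n → R) :=
  univ.image fun i => Pi.single i 1

def piFinSuccAddEquiv (R : Type*) [AddCommGroup R] (n : ℕ) : (Fin (n + 1) → R) ≃+ R × (Fin n → R) :=
  { (Fin.consEquiv fun _ => R).symm with map_add' := fun _ _ => rfl }

theorem piFinSuccAddEquiv_apply {R : Type*} [AddCommGroup R] {n : ℕ} (x : Fin (n + 1) → R) :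
    piFinSuccAddEquiv R n x = (x 0, Fin.tail x) := rfl

theorem image_unitVectors_piFinSuccAddEquiv (R : Type*) [Ring R] [DecidableEq R] (n : ℕ) :
    (unitVectors R (n + 1)).image (piFinSuccAddEquiv R n)
      = insert (1, 0) ((unitVectors R n).image ((0 : R), ·)) := by
  have hzero : piFinSuccAddEquiv R n (Pi.single 0 1) = (1, 0) := by
    ext i <;> simp [piFinSuccAddEquiv_apply, Fin.tail]
  have hsucc : ∀ i : Fin n, piFinSuccAddEquiv R n (Pi.single i.succ 1) = (0, Pi.single i 1) := by
    intro i
    ext j <;> simp [piFinSuccAddEquiv_apply, Fin.tail, Pi.single_apply]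
  simp only [unitVectors, image_image, Fin.univ_succ, cons_eq_insert, image_insert, map_eq_image,
    image_image, Function.comp_def, Function.Embedding.coeFn_mk, hzero, hsucc]

theorem sub_logb_card_mul_card_le_edgeBoundary {m : ℕ} (hm : m = 2 ∨ m = 3 ∨ m = 4) (n : ℕ)
    (A : Finset (Fin n → ZMod m)) :
    ((n : ℝ) - logb m #A) * #A ≤ edgeBoundary A (unitVectors (ZMod m) n) := by
  have : Fact (1 < m) := ⟨by omega⟩
  induction n with
  | zero =>
    have hA : #A ≤ 1 := (card_le_univ A).trans (by simp)
    rcases Nat.le_one_iff_eq_zero_or_eq_one.1 hA with h | h <;> simp [h]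
  | succ n ih =>
    rcases A.eq_empty_or_nonempty with rfl | hA
    · simp
    set B := A.image (piFinSuccAddEquiv (ZMod m) n)
    have hsplit : edgeBoundary A (unitVectors (ZMod m) (n + 1))
        = ∑ j, edgeBoundary (layer B j) (unitVectors (ZMod m) n)
          + ∑ j, #(layer B j \ layer B (j + 1)) := by
      rw [← edgeBoundary_image_addEquiv (piFinSuccAddEquiv (ZMod m) n),
        image_unitVectors_piFinSuccAddEquiv]
      exact edgeBoundary_prod one_ne_zero B _
    have hcard : ∑ j, (#(layer B j) : ℝ) = #A := by
      rw [← Nat.cast_sum, ← card_eq_sum_card_layer,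
        card_image_of_injective _ (AddEquiv.injective _)]
    obtain ⟨j₀, -, hmax⟩ := exists_max_image univ (fun j => #(layer B j)) univ_nonempty
    obtain ⟨j₁, -, hmin⟩ := exists_min_image univ (fun j => #(layer B j)) univ_nonempty
    have hentropy := add_one_sub_logb_sum_mul_sum_le hm (ZMod.card m) (fun j => (#(layer B j) : ℝ))
      (fun _ => by positivity) (hcard ▸ by exact_mod_cast hA.card_pos) j₀ j₁
      (fun j => by exact_mod_cast hmax j (mem_univ j))
      (fun j => by exact_mod_cast hmin j (mem_univ j)) n
    have hvert : (#(layer B j₀) : ℝ) ≤ #(layer B j₁) + ∑ j, #(layer B j \ layer B (j + 1)) := by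
      exact_mod_cast card_le_card_add_sum_card_sdiff (layer B) j₀ j₁
    have hslices : ∑ j, ((n : ℝ) - logb m #(layer B j)) * #(layer B j)
        ≤ ∑ j, (edgeBoundary (layer B j) (unitVectors (ZMod m) n) : ℝ) :=
      sum_le_sum fun j _ => ih _
    rw [hcard] at hentropy
    rw [hsplit]
    push_cast at hvert ⊢
    linarith

theorem ZMod.isUnit_iff_not_dvd_val {p k : ℕ} [hp : Fact p.Prime] (hk : k ≠ 0)
    (x : ZMod (p ^ k)) : IsUnit x ↔ ¬ p ∣ x.val := by
  rw [← ZMod.natCast_zmod_val x, ZMod.isUnit_iff_coprime, Nat.coprime_pow_right_iff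
    (Nat.pos_of_ne_zero hk), Nat.coprime_comm, hp.out.coprime_iff_not_dvd, ZMod.val_natCast,
    Nat.mod_eq_of_lt (ZMod.val_lt x)]

theorem ZMod.isLocalRing_prime_pow {p k : ℕ} [hp : Fact p.Prime] (hk : k ≠ 0) :
    IsLocalRing (ZMod (p ^ k)) := by
  have : Fact (1 < p ^ k) := ⟨Nat.one_lt_pow hk hp.out.one_lt⟩
  refine IsLocalRing.of_nonunits_add fun x y hx hy => ?_
  simp only [mem_nonunits_iff, ZMod.isUnit_iff_not_dvd_val hk, not_not] at hx hy ⊢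
  rw [ZMod.val_add]
  exact (Nat.dvd_mod_iff (dvd_pow_self p hk)).2 (dvd_add hx hy)

theorem exists_addEquiv_symm_single_mem {R G : Type*} [CommRing R] [IsLocalRing R]
    [AddCommGroup G] {n : ℕ} (φ : G ≃+ (Fin n → R)) {S : Set G}
    (hS : AddSubgroup.closure S = ⊤) :
    ∃ χ : G ≃+ (Fin n → R), ∀ i, χ.symm (Pi.single i 1) ∈ S := by
  have hclosure : AddSubgroup.closure (Set.range fun s : S => φ s) = ⊤ := by
    rw [← Set.image_eq_range, ← AddEquiv.coe_toAddMonoidHom, ← AddMonoidHom.map_closure, hS]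
    exact AddSubgroup.map_top_of_surjective _ φ.surjective
  have hspan : Submodule.span R (Set.range fun s : S => φ s) = ⊤ :=
    eq_top_iff.2 fun x _ => (AddSubgroup.closure_le (Submodule.span R _).toAddSubgroup).2
      Submodule.subset_span (hclosure ▸ AddSubgroup.mem_top x)
  obtain ⟨κ, a, b, hb⟩ := Module.exists_basis_of_span_of_flat _ hspan
  let ψ := (Pi.basisFun R (Fin n)).equiv b ((Pi.basisFun R (Fin n)).indexEquiv b)
  refine ⟨φ.trans ψ.symm.toAddEquiv, fun i => ?_⟩
  simp [ψ, ← Pi.basisFun_apply, hb]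

theorem rpow_le_of_sub_logb_mul_le {b a γ : ℝ} {n : ℕ} (hb : 1 < b) (ha : 0 < a)
    (h : (n - logb b a) * a ≤ (1 - γ) * n * a) : (b ^ n) ^ γ ≤ a := by
  have h' : n - logb b a ≤ (1 - γ) * n := le_of_mul_le_mul_right h ha
  rw [← rpow_natCast, ← rpow_mul (by positivity), ← le_logb_iff_rpow_le hb ha]
  linarith

theorem isoperimetric_exp234_general {G : Type*} [AddCommGroup G] [Fintype G] [DecidableEq G]
    (m n : ℕ) (hm : m = 2 ∨ m = 3 ∨ m = 4)
    (hG : Nonempty (G ≃+ (Fin n → ZMod m)))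
    (S : Finset G) (hgen : AddSubgroup.closure (S : Set G) = ⊤)
    (A : Finset G) (hA : A.Nonempty)
    (γ : ℝ)
    (hbd : (edgeBoundary A S : ℝ) ≤ (1 - γ) * n * A.card) :
    (Fintype.card G : ℝ) ^ γ ≤ A.card := by
  obtain ⟨φ⟩ := hG
  have : IsLocalRing (ZMod m) := by
    rcases hm with rfl | rfl | rfl
    · infer_instance
    · infer_instance
    · exact ZMod.isLocalRing_prime_pow (p := 2) (k := 2) two_ne_zero
  obtain ⟨χ, hχ⟩ := exists_addEquiv_symm_single_mem φ hgen
  have hsub : unitVectors (ZMod m) n ⊆ S.image χ := by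
    simp only [unitVectors, image_subset_iff, mem_univ, forall_const]
    exact fun i => mem_image.2 ⟨_, hχ i, χ.apply_symm_apply _⟩
  have hcore := sub_logb_card_mul_card_le_edgeBoundary hm n (A.image χ)
  rw [card_image_of_injective _ χ.injective] at hcore
  have hboundary : edgeBoundary (A.image χ) (unitVectors (ZMod m) n) ≤ edgeBoundary A S :=
    (edgeBoundary_mono _ hsub).trans_eq (edgeBoundary_image_addEquiv χ A S)
  have hcardG : Fintype.card G = m ^ n := by
    have : NeZero m := ⟨by omega⟩
    simp [Fintype.card_congr φ.toEquiv]
  rw [hcardG, Nat.cast_pow]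
  exact rpow_le_of_sub_logb_mul_le (by norm_cast; omega) (by exact_mod_cast hA.card_pos)
    (hcore.trans ((Nat.cast_le.2 hboundary).trans hbd))

/-- **Theorem 1 (exp234).** Let `G` be a homocyclic finite abelian group of exponent
`m ∈ {2,3,4}` and rank `n` (i.e. `G ≅ C_m^n`). If `A ⊆ G` is non-empty, `S ⊆ G` is a
generating subset, `γ ∈ (0,1]`, and `∂_S(A) ≤ (1-γ)·n·|A|`, then `|A| ≥ |G|^γ`. -/
theorem isoperimetric_exp234 {G : Type*} [AddCommGroup G] [Fintype G] [DecidableEq G]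
    (m n : ℕ) (hm : m = 2 ∨ m = 3 ∨ m = 4)
    (hG : Nonempty (G ≃+ (Fin n → ZMod m)))
    (S : Finset G) (hgen : AddSubgroup.closure (S : Set G) = ⊤)
    (A : Finset G) (hA : A.Nonempty)
    (γ : ℝ) (hγ0 : 0 < γ) (hγ1 : γ ≤ 1)
    (hbd : (edgeBoundary A S : ℝ) ≤ (1 - γ) * n * A.card) :
    (Fintype.card G : ℝ) ^ γ ≤ A.card :=
  isoperimetric_exp234_general m n hm hG S hgen A hA γ hbd
end

section
/- Let G be an abelian group of exponent 2 or 3, and let A, S ⊆ G be finite non-empty subsets. Let H = ⟨S⟩ be the subgroup generated by S and n = rk H its rank, and let γ ∈ (0,1] be real. If ∂_S(A) ≤ (1-γ)·n·|A|, then |A| ≥ |H|^γ. -/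
/-!
Write `H = ⟨S⟩`. One proves `|A| log (|H| / |A|) ≤ log p · ∂_S(A)` for every finite `A`, by
induction on `S`; since `log |H| = n log p`, this is the theorem. Cutting `A` along the cosets of
`H` only increases the left side and leaves `∂_S` unchanged, so `A` may be taken inside one coset.
When a generator `s ∉ K = ⟨S'⟩` is added, that coset splits into `p` cosets of `K`, cyclically
permuted by `+ s`. The slices `A_j` of `A` satisfy `x_j ≤ x_{j+1} + d_j`, where `x_j = |A_j|` and
`d_j` counts the `s`-edges leaving `A_j`; the induction hypothesis bounds each slice, and what
remains is the entropy estimate `(∑ x_j - ∑ d_j) log p ≤ ∑ negMulLog x_j - negMulLog (∑ x_j)`. For `p ≤ 3` it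
follows from concavity of `negMulLog`, because `∑ d_j ≥ max x_j - min x_j`.
-/

open Finset Real

lemma sum_mul_negMulLog_le {ι : Type*} (t : Finset ι) {w x : ι → ℝ} {W y : ℝ}
    (hw : ∀ i ∈ t, 0 ≤ w i) (hx : ∀ i ∈ t, 0 ≤ x i) (hW : ∑ i ∈ t, w i = W) (hWpos : 0 < W)
    (hy : ∑ i ∈ t, w i * x i = W * y) :
    ∑ i ∈ t, w i * negMulLog (x i) ≤ W * negMulLog y := by
  have h := concaveOn_negMulLog.le_map_centerMass hw (hW ▸ hWpos) hx
  simp only [centerMass, hW, hy, smul_eq_mul, Function.comp_apply,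
    inv_mul_cancel_left₀ hWpos.ne'] at h
  exact (inv_mul_le_iff₀ hWpos).1 h

/-- Jensen's inequality in each coordinate of
`(a, b, c) = (a - b) • (1, 0, 0) + 2 (b - c) • (½, ½, 0) + 3 c • (⅓, ⅓, ⅓)`. -/
lemma le_entropy_of_sorted {a b c T : ℝ} (hc : 0 ≤ c) (hcb : c ≤ b) (hba : b ≤ a)
    (hT : a + b + c = T) :
    2 * (b - c) * log 2 + 3 * c * log 3 ≤
      negMulLog a + negMulLog b + negMulLog c - negMulLog T := by
  rcases (show 0 ≤ T by linarith).eq_or_lt with rfl | hTpos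
  · obtain rfl : a = 0 := by linarith
    obtain rfl : b = 0 := by linarith
    obtain rfl : c = 0 := by linarith
    simp
  have jensen (x₀ x₁ x₂ y : ℝ) (h₀ : 0 ≤ x₀) (h₁ : 0 ≤ x₁) (h₂ : 0 ≤ x₂)
      (hy : (a - b) * x₀ + 2 * (b - c) * x₁ + 3 * c * x₂ = T * y) :
      (a - b) * negMulLog x₀ + 2 * (b - c) * negMulLog x₁ + 3 * c * negMulLog x₂ ≤
        T * negMulLog y := by
    have hw : ∀ i ∈ univ, 0 ≤ ![a - b, 2 * (b - c), 3 * c] i := by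
      intro i _; fin_cases i <;> simp <;> linarith
    have hx : ∀ i ∈ univ, 0 ≤ ![x₀, x₁, x₂] i := by
      intro i _; fin_cases i <;> simpa
    simpa [Fin.sum_univ_three] using sum_mul_negMulLog_le univ hw hx
      (by simp [Fin.sum_univ_three]; linarith) hTpos (by simpa [Fin.sum_univ_three] using hy)
  have ja := jensen T (T / 2) (T / 3) a hTpos.le (by positivity) (by positivity) (by ring)
  have jb := jensen 0 (T / 2) (T / 3) b le_rfl (by positivity) (by positivity) (by ring)
  have jc := jensen 0 0 (T / 3) c le_rfl le_rfl (by positivity) (by ring)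
  have half : negMulLog (T / 2) = T / 2 * (log 2 - log T) := by
    rw [negMulLog, log_div hTpos.ne' two_ne_zero]; ring
  have third : negMulLog (T / 3) = T / 3 * (log 3 - log T) := by
    rw [negMulLog, log_div hTpos.ne' three_ne_zero]; ring
  simp only [half, third, negMulLog_zero] at ja jb jc
  rw [← mul_le_mul_iff_right₀ hTpos]
  subst hT
  simp only [negMulLog] at ja jb jc ⊢
  linear_combination ja + jb + jc

lemma sub_mul_log_two_le_entropy {a b T D : ℝ} (hb : 0 ≤ b) (hba : b ≤ a) (hT : a + b = T)
    (hD : a - b ≤ D) : (T - D) * log 2 ≤ negMulLog a + negMulLog b - negMulLog T := by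
  have h := le_entropy_of_sorted (T := T) le_rfl hb hba (by linarith)
  have : (T - D) * log 2 ≤ 2 * b * log 2 :=
    mul_le_mul_of_nonneg_right (by linarith) (log_nonneg one_le_two)
  simp only [negMulLog_zero] at h
  linarith

lemma sub_mul_log_three_le_entropy {a b c T D : ℝ} (hc : 0 ≤ c) (hcb : c ≤ b) (hba : b ≤ a)
    (hT : a + b + c = T) (hD : a - c ≤ D) :
    (T - D) * log 3 ≤ negMulLog a + negMulLog b + negMulLog c - negMulLog T := by
  have h := le_entropy_of_sorted hc hcb hba hT
  have log_three_le : log 3 ≤ 2 * log 2 := by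
    rw [← log_rpow two_pos]; exact log_le_log (by norm_num) (by norm_num)
  have h₁ : (b - c) * log 3 ≤ (b - c) * (2 * log 2) :=
    mul_le_mul_of_nonneg_left log_three_le (by linarith)
  have h₂ : (T - D) * log 3 ≤ (b + 2 * c) * log 3 :=
    mul_le_mul_of_nonneg_right (by linarith) (log_nonneg (by norm_num))
  linarith

lemma sub_mul_log_le_entropy_of_cyclic {p : ℕ} (hp : p = 2 ∨ p = 3) {x d : ℕ → ℝ}
    (hx : ∀ j, 0 ≤ x j) (hd : ∀ j, 0 ≤ d j) (hstep : ∀ j < p, x j ≤ x ((j + 1) % p) + d j) :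
    (∑ j ∈ range p, x j - ∑ j ∈ range p, d j) * log p ≤
      ∑ j ∈ range p, negMulLog (x j) - negMulLog (∑ j ∈ range p, x j) := by
  rcases hp with rfl | rfl
  · have h₀ := hstep 0 (by norm_num)
    have h₁ := hstep 1 (by norm_num)
    simp only [Nat.reduceAdd, Nat.reduceMod, Nat.cast_ofNat] at h₀ h₁ ⊢
    simp only [sum_range_succ, sum_range_zero, zero_add]
    have := hd 0; have := hd 1
    rcases le_total (x 1) (x 0) with h | h
    · linarith [sub_mul_log_two_le_entropy (hx 1) h rfl (D := d 0 + d 1) (by linarith)]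
    · linarith [sub_mul_log_two_le_entropy (hx 0) h (add_comm _ _) (D := d 0 + d 1) (by linarith)]
  · have h₀ := hstep 0 (by norm_num)
    have h₁ := hstep 1 (by norm_num)
    have h₂ := hstep 2 (by norm_num)
    simp only [Nat.reduceAdd, Nat.reduceMod, Nat.cast_ofNat] at h₀ h₁ h₂ ⊢
    simp only [sum_range_succ, sum_range_zero, zero_add]
    have := hd 0; have := hd 1; have := hd 2
    set T := x 0 + x 1 + x 2
    set D := d 0 + d 1 + d 2
    rcases le_total (x 0) (x 1) with h₀₁ | h₀₁ <;> rcases le_total (x 1) (x 2) with h₁₂ | h₁₂ <;>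
      rcases le_total (x 0) (x 2) with h₀₂ | h₀₂
    · linarith [sub_mul_log_three_le_entropy (hx 0) h₀₁ h₁₂
        (T := T) (D := D) (by ring) (by linarith)]
    · linarith [sub_mul_log_three_le_entropy (hx 0) h₀₁ h₁₂
        (T := T) (D := D) (by ring) (by linarith)]
    · linarith [sub_mul_log_three_le_entropy (hx 0) h₀₂ h₁₂
        (T := T) (D := D) (by ring) (by linarith)]
    · linarith [sub_mul_log_three_le_entropy (hx 2) h₀₂ h₀₁
        (T := T) (D := D) (by ring) (by linarith)]
    · linarith [sub_mul_log_three_le_entropy (hx 1) h₀₁ h₀₂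
        (T := T) (D := D) (by ring) (by linarith)]
    · linarith [sub_mul_log_three_le_entropy (hx 1) h₁₂ h₀₂
        (T := T) (D := D) (by ring) (by linarith)]
    · linarith [sub_mul_log_three_le_entropy (hx 2) h₁₂ h₀₁
        (T := T) (D := D) (by ring) (by linarith)]
    · linarith [sub_mul_log_three_le_entropy (hx 2) h₁₂ h₀₁
        (T := T) (D := D) (by ring) (by linarith)]

lemma mul_log_div_eq {N : ℝ} (hN : N ≠ 0) (x : ℝ) :
    x * log (N / x) = x * log N + negMulLog x := by
  rcases eq_or_ne x 0 with rfl | hx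
  · simp
  · rw [log_div hN hx, negMulLog]; ring

lemma sum_mul_log_div_le_of_cyclic {p : ℕ} (hp : p = 2 ∨ p = 3) {N : ℝ} (hN : 0 < N)
    {x d : ℕ → ℝ} (hx : ∀ j, 0 ≤ x j) (hd : ∀ j, 0 ≤ d j)
    (hstep : ∀ j < p, x j ≤ x ((j + 1) % p) + d j) :
    (∑ j ∈ range p, x j) * log (N * p / ∑ j ∈ range p, x j) ≤
      log p * ∑ j ∈ range p, d j + ∑ j ∈ range p, x j * log (N / x j) := by
  have hp₀ : (p : ℝ) ≠ 0 := by rcases hp with rfl | rfl <;> norm_num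
  have := sub_mul_log_le_entropy_of_cyclic hp hx hd hstep
  simp only [mul_log_div_eq hN.ne', mul_log_div_eq (mul_ne_zero hN.ne' hp₀), log_mul hN.ne' hp₀,
    sum_add_distrib, ← sum_mul]
  linarith

lemma mul_log_div_le_mul_log_div {x y N : ℝ} (hx : 0 ≤ x) (hxy : x ≤ y) (hN : 0 < N) :
    x * log (N / y) ≤ x * log (N / x) := by
  rcases hx.eq_or_lt with rfl | hx
  · simp
  · exact mul_le_mul_of_nonneg_left
      (log_le_log (div_pos hN (hx.trans_le hxy)) (div_le_div_of_nonneg_left hN.le hx hxy)) hx.le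

section Subgroup

open AddSubgroup

variable {G : Type*} [AddCommGroup G]

lemma addOrderOf_mk_eq_prime {p : ℕ} [Fact p.Prime] {K : AddSubgroup G} {s : G} (hs : s ∉ K)
    (hps : p • s = 0) : addOrderOf (s : G ⧸ K) = p :=
  addOrderOf_eq_prime (by rw [← QuotientAddGroup.mk_nsmul, hps, QuotientAddGroup.mk_zero])
    (by rwa [Ne, QuotientAddGroup.eq_zero_iff])

lemma closure_insert_eq_comap (L : Set G) (s : G) :
    closure (insert s L) = (zmultiples (s : G ⧸ closure L)).comap (QuotientAddGroup.mk' _) := by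
  apply le_antisymm
  · rw [closure_le, Set.insert_subset_iff]
    refine ⟨mem_zmultiples _, fun l hl => ?_⟩
    simp [(QuotientAddGroup.eq_zero_iff l).2 (subset_closure hl)]
  · intro x hx
    obtain ⟨k, hk⟩ := mem_zmultiples_iff.1 (mem_comap.1 hx)
    have : x - k • s ∈ closure L := by
      rw [← QuotientAddGroup.eq_iff_sub_mem]; simpa using hk.symm
    simpa using add_mem (closure_mono (Set.subset_insert s L) this)
      (zsmul_mem (subset_closure (Set.mem_insert s L)) k)

lemma card_closure_insert {p : ℕ} [Fact p.Prime] {L : Set G} {s : G} (hs : s ∉ closure L)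
    (hps : p • s = 0) : Nat.card (closure (insert s L)) = Nat.card (closure L) * p := by
  rw [closure_insert_eq_comap, ← addOrderOf_mk_eq_prime hs hps, ← Nat.card_zmultiples,
    ← Nat.card_prod]
  exact Nat.card_congr (QuotientAddGroup.preimageMkEquivAddSubgroupProdSet (closure L)
    (zmultiples (s : G ⧸ closure L)))

lemma finite_closure_of_nsmul_eq_zero {n : ℕ} (hn : n ≠ 0) {L : Finset G}
    (hL : ∀ s ∈ L, n • s = 0) : Finite (closure (L : Set G)) := by
  have hle : closure (L : Set G) ≤ (nsmulAddMonoidHom (α := G) n).ker :=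
    (closure_le _).2 fun s hs => hL s hs
  refine AddCommGroup.finite_of_fg_isAddTorsion _ fun x =>
    isOfFinAddOrder_iff_nsmul_eq_zero.2 ⟨n, Nat.pos_of_ne_zero hn, Subtype.ext ?_⟩
  simpa using hle x.2

end Subgroup

section Boundary

variable {G : Type*} [AddCommGroup G] [DecidableEq G]

lemma edgeBoundary_insert (A : Finset G) {S : Finset G} {s : G} (hs : s ∉ S) :
    edgeBoundary A (insert s S) = #{a ∈ A | a + s ∉ A} + edgeBoundary A S := by
  have hdisj : Disjoint (A ×ˢ {s}) (A ×ˢ S) :=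
    disjoint_product.2 (Or.inr (disjoint_singleton_left.2 hs))
  rw [edgeBoundary, edgeBoundary, insert_eq, product_union, filter_union,
    card_union_of_disjoint (disjoint_filter_filter hdisj), product_singleton, filter_map,
    card_map]
  rfl

lemma sum_edgeBoundary_fiberwise {β : Type*} [DecidableEq β] (f : G → β) {t : Finset β}
    {A : Finset G} (S : Finset G) (hf : ∀ a ∈ A, f a ∈ t) (hS : ∀ a, ∀ s ∈ S, f (a + s) = f a) :
    ∑ b ∈ t, edgeBoundary {a ∈ A | f a = b} S = edgeBoundary A S := by
  rw [edgeBoundary, card_eq_sum_card_fiberwise (f := fun x => f x.1) (t := t)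
    (fun x hx => hf _ (mem_product.1 (mem_filter.1 hx).1).1)]
  refine sum_congr rfl fun b _ => congrArg card ?_
  ext ⟨a, s⟩
  simp only [mem_filter, mem_product]
  constructor
  · rintro ⟨⟨⟨ha, rfl⟩, hs⟩, has⟩
    exact ⟨⟨⟨ha, hs⟩, fun h => has ⟨h, hS a s hs⟩⟩, rfl⟩
  · rintro ⟨⟨⟨ha, hs⟩, has⟩, rfl⟩
    exact ⟨⟨⟨ha, rfl⟩, hs⟩, fun h => has h.1⟩

lemma card_le_card_add_card_filter_add_notMem {A B C : Finset G} {s : G}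
    (h : ∀ b ∈ B, b + s ∈ A → b + s ∈ C) : #B ≤ #C + #{b ∈ B | b + s ∉ A} := by
  rw [← card_filter_add_card_filter_not (p := fun b => b + s ∈ A)]
  exact Nat.add_le_add_right (card_le_card_of_injOn (· + s)
    (fun b hb => h b (mem_filter.1 hb).1 (mem_filter.1 hb).2) (fun _ _ _ _ => add_right_cancel)) _

end Boundary

section Isoperimetry

open AddSubgroup

variable {G : Type*} [AddCommGroup G] [DecidableEq G]

lemma card_mul_log_le_edgeBoundary_insert {p : ℕ} (hp : p = 2 ∨ p = 3) {K : AddSubgroup G} [Finite K]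
    {L : Finset G} (hLK : ∀ l ∈ L, l ∈ K) {s : G} (hsL : s ∉ L) (hs : s ∉ K) (hps : p • s = 0)
    (ih : ∀ (B : Finset G) (g : G), (∀ b ∈ B, b - g ∈ K) →
      #B * log (Nat.card K / #B) ≤ log p * edgeBoundary B L)
    {A : Finset G} {g : G} (hA : ∀ a ∈ A, ((a - g : G) : G ⧸ K) ∈ zmultiples (s : G ⧸ K)) :
    #A * log (Nat.card K * p / #A) ≤ log p * edgeBoundary A (insert s L) := by
  classical
  have : Fact p.Prime := ⟨by rcases hp with rfl | rfl <;> norm_num⟩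
  set σ : G ⧸ K := (s : G ⧸ K)
  have hσ : addOrderOf σ = p := addOrderOf_mk_eq_prime hs hps
  set f : G → G ⧸ K := fun a => ((a - g : G) : G ⧸ K)
  set slice : ℕ → Finset G := fun j => {a ∈ A | f a = j • σ}
  have hinj : Set.InjOn (· • σ) (range p : Set ℕ) := by
    simpa [← hσ] using nsmul_injOn_Iio_addOrderOf (x := σ)
  have hf : ∀ a ∈ A, f a ∈ (range p).image (· • σ) := fun a ha => hσ ▸
    (IsOfFinAddOrder.mem_zmultiples_iff_mem_range_addOrderOf
      (addOrderOf_pos_iff.1 (hσ ▸ Nat.Prime.pos Fact.out))).1 (hA a ha)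
  have card_eq : #A = ∑ j ∈ range p, #(slice j) := by
    rw [card_eq_sum_card_fiberwise hf, sum_image hinj]
  have boundary_L : edgeBoundary A L = ∑ j ∈ range p, edgeBoundary (slice j) L := by
    refine (sum_edgeBoundary_fiberwise f L hf fun a l hl => ?_).symm.trans (sum_image hinj)
    rw [QuotientAddGroup.eq_iff_sub_mem]
    simpa using hLK l hl
  have boundary_s : #{a ∈ A | a + s ∉ A} = ∑ j ∈ range p, #{a ∈ slice j | a + s ∉ A} := by
    rw [card_eq_sum_card_fiberwise fun a ha => hf a (mem_filter.1 ha).1, sum_image hinj]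
    simp only [slice, filter_comm]
  have step (j : ℕ) (hj : j < p) :
      #(slice j) ≤ #(slice ((j + 1) % p)) + #{a ∈ slice j | a + s ∉ A} := by
    refine card_le_card_add_card_filter_add_notMem fun a ha has => mem_filter.2 ⟨has, ?_⟩
    rw [← hσ, mod_addOrderOf_nsmul, succ_nsmul, ← (mem_filter.1 ha).2]
    simp [f, σ, add_sub_right_comm]
  have ih_slice (j : ℕ) :
      #(slice j) * log (Nat.card K / #(slice j)) ≤ log p * edgeBoundary (slice j) L := by
    refine ih _ (g + j • s) fun a ha => ?_
    rw [← sub_sub, ← QuotientAddGroup.eq_iff_sub_mem, QuotientAddGroup.mk_nsmul]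
    exact (mem_filter.1 ha).2
  have hN : (0 : ℝ) < Nat.card K := by exact_mod_cast Nat.card_pos
  calc (#A : ℝ) * log (Nat.card K * p / #A)
      = (∑ j ∈ range p, (#(slice j) : ℝ)) *
          log (Nat.card K * p / ∑ j ∈ range p, (#(slice j) : ℝ)) := by
        rw [card_eq]; push_cast; rfl
    _ ≤ log p * ∑ j ∈ range p, (#{a ∈ slice j | a + s ∉ A} : ℝ) +
          ∑ j ∈ range p, #(slice j) * log (Nat.card K / #(slice j)) :=
        sum_mul_log_div_le_of_cyclic hp hN (fun _ => Nat.cast_nonneg _) (fun _ => Nat.cast_nonneg _)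
          fun j hj => by exact_mod_cast step j hj
    _ ≤ log p * ∑ j ∈ range p, (#{a ∈ slice j | a + s ∉ A} : ℝ) +
          ∑ j ∈ range p, log p * edgeBoundary (slice j) L :=
        add_le_add_right (sum_le_sum fun j _ => ih_slice j) _
    _ = log p * edgeBoundary A (insert s L) := by
        rw [edgeBoundary_insert _ hsL, boundary_L, boundary_s, ← mul_sum, ← mul_add]
        push_cast; rfl

theorem card_mul_log_le_edgeBoundary_of_sub_mem_closure {p : ℕ} (hp : p = 2 ∨ p = 3) {L : Finset G}
    (hL : ∀ s ∈ L, p • s = 0) {A : Finset G} {g : G}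
    (hA : ∀ a ∈ A, a - g ∈ closure (L : Set G)) :
    #A * log (Nat.card (closure (L : Set G)) / #A) ≤ log p * edgeBoundary A L := by
  have hlogp : 0 ≤ log p := log_natCast_nonneg p
  induction L using Finset.induction_on generalizing A g with
  | empty =>
    simp only [coe_empty, AddSubgroup.closure_empty, card_bot, Nat.cast_one, one_div]
    exact (mul_nonpos_of_nonneg_of_nonpos (Nat.cast_nonneg _)
      (log_nonpos (by positivity) (Nat.cast_inv_le_one _))).trans (by positivity)
  | insert s L hsL ih =>
    have hL' : ∀ l ∈ L, p • l = 0 := fun l hl => hL l (mem_insert_of_mem hl)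
    have hps : p • s = 0 := hL s (mem_insert_self s L)
    rw [coe_insert] at hA ⊢
    by_cases hs : s ∈ closure (L : Set G)
    · have hclosure : AddSubgroup.closure (insert s (L : Set G)) = AddSubgroup.closure L :=
        le_antisymm (AddSubgroup.closure_le _ |>.2 (Set.insert_subset hs subset_closure))
          (AddSubgroup.closure_mono (Set.subset_insert _ _))
      rw [hclosure] at hA ⊢
      rw [edgeBoundary_insert _ hsL, Nat.cast_add]
      exact (ih hL' hA).trans
        (mul_le_mul_of_nonneg_left (le_add_of_nonneg_left (Nat.cast_nonneg _)) hlogp)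
    · have : Fact p.Prime := ⟨by rcases hp with rfl | rfl <;> norm_num⟩
      have := finite_closure_of_nsmul_eq_zero (NeZero.ne p) hL'
      rw [card_closure_insert hs hps, Nat.cast_mul]
      refine card_mul_log_le_edgeBoundary_insert (g := g) hp (fun l hl => subset_closure hl) hsL hs hps
        (fun B g hB => ih hL' hB) fun a ha => ?_
      have := hA a ha
      rwa [closure_insert_eq_comap] at this

theorem card_mul_log_le_edgeBoundary {p : ℕ} (hp : p = 2 ∨ p = 3) {L : Finset G}
    (hL : ∀ s ∈ L, p • s = 0) (A : Finset G) :
    #A * log (Nat.card (closure (L : Set G)) / #A) ≤ log p * edgeBoundary A L := by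
  classical
  have := finite_closure_of_nsmul_eq_zero (by rcases hp with rfl | rfl <;> norm_num) hL
  have hN : (0 : ℝ) < Nat.card (closure (L : Set G)) := by exact_mod_cast Nat.card_pos
  let φ : G → G ⧸ closure (L : Set G) := QuotientAddGroup.mk
  have hφ : ∀ a ∈ A, φ a ∈ A.image φ := fun a ha => mem_image_of_mem φ ha
  calc (#A : ℝ) * log (Nat.card (closure (L : Set G)) / #A)
      = ∑ q ∈ A.image φ, #{a ∈ A | φ a = q} * log (Nat.card (closure (L : Set G)) / #A) := by
        rw [card_eq_sum_card_fiberwise hφ, Nat.cast_sum, sum_mul]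
    _ ≤ ∑ q ∈ A.image φ,
          #{a ∈ A | φ a = q} * log (Nat.card (closure (L : Set G)) / #{a ∈ A | φ a = q}) :=
        sum_le_sum fun q _ => mul_log_div_le_mul_log_div (Nat.cast_nonneg _)
          (by exact_mod_cast card_le_card (filter_subset _ _)) hN
    _ ≤ ∑ q ∈ A.image φ, log p * edgeBoundary {a ∈ A | φ a = q} L := by
        refine sum_le_sum fun q hq => ?_
        obtain ⟨g, -, rfl⟩ := mem_image.1 hq
        exact card_mul_log_le_edgeBoundary_of_sub_mem_closure hp hL fun a ha =>
          QuotientAddGroup.eq_iff_sub_mem.1 (mem_filter.1 ha).2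
    _ = log p * edgeBoundary A L := by
        rw [← mul_sum, ← Nat.cast_sum, sum_edgeBoundary_fiberwise φ L hφ fun a l hl =>
          QuotientAddGroup.eq_iff_sub_mem.2 (by simpa using subset_closure hl)]

end Isoperimetry

theorem isoperimetric_coset_decomp_general {G : Type*} [AddCommGroup G] [DecidableEq G]
    (p : ℕ) (hp : p = 2 ∨ p = 3)
    (S : Finset G)
    (A : Finset G) (hA : A.Nonempty)
    (n : ℕ) (hH : Nonempty (AddSubgroup.closure (S : Set G) ≃+ (Fin n → ZMod p)))
    (γ : ℝ)
    (hbd : (edgeBoundary A S : ℝ) ≤ (1 - γ) * n * A.card) :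
    (Nat.card (AddSubgroup.closure (S : Set G)) : ℝ) ^ γ ≤ A.card := by
  obtain ⟨e⟩ := hH
  have hcard : Nat.card (AddSubgroup.closure (S : Set G)) = p ^ n := by
    rw [Nat.card_congr e.toEquiv, Nat.card_pi]
    simp [Nat.card_zmod]
  have hS : ∀ s ∈ S, p • s = 0 := fun s hs => by
    have : e (p • ⟨s, AddSubgroup.subset_closure hs⟩) = 0 := by
      rw [map_nsmul]; ext i; simp
    simpa using congrArg Subtype.val (e.injective (this.trans e.map_zero.symm))
  have hA₀ : (0 : ℝ) < #A := by exact_mod_cast hA.card_pos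
  have hpn : (0 : ℝ) < (p : ℝ) ^ n := pow_pos (by rcases hp with rfl | rfl <;> norm_num) n
  have key := card_mul_log_le_edgeBoundary hp hS A
  have hbd' := mul_le_mul_of_nonneg_left hbd (log_natCast_nonneg p)
  rw [hcard, Nat.cast_pow, log_div hpn.ne' hA₀.ne', log_pow] at key
  rw [hcard, Nat.cast_pow, rpow_le_iff_le_log hpn hA₀, log_pow]
  refine le_of_mul_le_mul_left ?_ hA₀
  linarith

/-- **Corollary (cosetdecomp).** Let `G` be an abelian group of exponent `2` or `3`, and
let `A, S ⊆ G` be finite non-empty subsets. Let `H = ⟨S⟩` and let `n = rk H`, i.e.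
`H ≅ C_p^n` where `p = exp G`. If `γ ∈ (0,1]` and `∂_S(A) ≤ (1-γ)·n·|A|`, then
`|A| ≥ |H|^γ`. -/
theorem isoperimetric_coset_decomp {G : Type*} [AddCommGroup G] [DecidableEq G]
    (p : ℕ) (hp : p = 2 ∨ p = 3) (hexp : AddMonoid.exponent G = p)
    (S : Finset G) (hS : S.Nonempty)
    (A : Finset G) (hA : A.Nonempty)
    (n : ℕ) (hH : Nonempty (AddSubgroup.closure (S : Set G) ≃+ (Fin n → ZMod p)))
    (γ : ℝ) (hγ0 : 0 < γ) (hγ1 : γ ≤ 1)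
    (hbd : (edgeBoundary A S : ℝ) ≤ (1 - γ) * n * A.card) :
    (Nat.card (AddSubgroup.closure (S : Set G)) : ℝ) ^ γ ≤ A.card :=
  isoperimetric_coset_decomp_general p hp S A hA n hH γ hbd
end

section
/- If n ≥ 1 is an integer and A ⊆ ℤ_{≥0}^n is a finite non-empty downset, then (1/|A|) · Σ_{a∈A} w(a) ≤ (1/2) · log₂|A|. -/
/-!
Cut `A` into the slices `A_t = {x | (t, x) ∈ A}` along the first coordinate. They are downsets,
`A_t ⊆ A_0`, and `w(t, x) = w(x) + [t ≠ 0]`, so by induction on `n` it suffices to show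
`∑ f(|A_t|) + 2 ∑_{t ≥ 1} |A_t| ≤ f(|A|)` for `f(x) = x log₂ x`. Adding the slices one at a time,
this follows from `f(a) + f(b) + 2b ≤ f(a + b)` for `0 ≤ b ≤ a`, which is the bound `H(p) ≥ 2p`
on `[0, 1/2]` for the binary entropy in bits: `H` is concave with `H(0) = 0` and `H(1/2) = 1`.
-/

/-- The weight of a vector: the number of its non-zero coordinates. -/
def weight {n : ℕ} (a : Fin n → ℕ) : ℕ :=
  (Finset.univ.filter (fun i => a i ≠ 0)).card

open Real Finset

lemma two_mul_mul_log_two_le_binEntropy {x : ℝ} (hx₀ : 0 ≤ x) (hx : x ≤ 2⁻¹) :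
    2 * x * log 2 ≤ binEntropy x := by
  have h : (1 - 2 * x) • binEntropy 0 + (2 * x) • binEntropy 2⁻¹ ≤
      binEntropy ((1 - 2 * x) • 0 + (2 * x) • 2⁻¹) :=
    strictConcave_binEntropy.concaveOn.2 (by norm_num) (by norm_num) (by linarith) (by linarith)
      (by ring)
  simp only [binEntropy_zero, binEntropy_two_inv, smul_eq_mul, mul_zero, zero_add] at h
  convert h using 2
  ring

lemma add_mul_binEntropy_div_add {a b : ℝ} (ha : 0 ≤ a) (hb : 0 ≤ b) :
    (a + b) * binEntropy (b / (a + b)) = (a + b) * log (a + b) - a * log a - b * log b := by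
  rcases hb.eq_or_lt with rfl | hb
  · simp
  rcases ha.eq_or_lt with rfl | ha
  · simp [hb.ne']
  have hs : 0 < a + b := by linarith
  have h1 : 1 - b / (a + b) = a / (a + b) := by field_simp; ring
  rw [binEntropy, h1, inv_div, inv_div, log_div hs.ne' ha.ne', log_div hs.ne' hb.ne']
  field_simp
  ring

lemma mul_logb_add_mul_logb_add_two_mul_le {a b : ℝ} (hb : 0 ≤ b) (hba : b ≤ a) :
    a * logb 2 a + b * logb 2 b + 2 * b ≤ (a + b) * logb 2 (a + b) := by
  rcases hb.eq_or_lt with rfl | hb'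
  · simp
  have hs : 0 < a + b := by linarith
  have hx : b / (a + b) ≤ 2⁻¹ := by rw [div_le_iff₀ hs]; linarith
  have key := mul_le_mul_of_nonneg_left
    (two_mul_mul_log_two_le_binEntropy (div_nonneg hb hs.le) hx) hs.le
  rw [add_mul_binEntropy_div_add (hb.trans hba) hb,
    show (a + b) * (2 * (b / (a + b)) * log 2) = 2 * b * log 2 by field_simp] at key
  have hlog2 : 0 < log 2 := log_pos one_lt_two
  simp only [logb, ← mul_div_assoc]
  rw [le_div_iff₀ hlog2, add_mul, add_mul, div_mul_cancel₀ _ hlog2.ne',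
    div_mul_cancel₀ _ hlog2.ne']
  linarith

lemma mul_logb_add_sum_mul_logb_add_two_mul_sum_le {ι : Type*} (s : Finset ι) (c : ι → ℝ)
    {m : ℝ} (hc : ∀ i ∈ s, 0 ≤ c i ∧ c i ≤ m) :
    m * logb 2 m + ∑ i ∈ s, c i * logb 2 (c i) + 2 * ∑ i ∈ s, c i ≤
      (m + ∑ i ∈ s, c i) * logb 2 (m + ∑ i ∈ s, c i) := by
  classical
  induction s using Finset.induction_on with
  | empty => simp
  | insert j s hj ih =>
    obtain ⟨hj₀, hjm⟩ := hc j (mem_insert_self j s)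
    have ih := ih fun i hi => hc i (mem_insert_of_mem hi)
    have hs₀ : 0 ≤ ∑ i ∈ s, c i := sum_nonneg fun i hi => (hc i (mem_insert_of_mem hi)).1
    have step := mul_logb_add_mul_logb_add_two_mul_le hj₀ (le_add_of_le_of_nonneg hjm hs₀)
    rw [sum_insert hj, sum_insert hj, ← add_assoc m, add_right_comm m]
    linarith

lemma weight_cons {n : ℕ} (t : ℕ) (x : Fin n → ℕ) :
    weight (Fin.cons t x : Fin (n + 1) → ℕ) = weight x + if t = 0 then 0 else 1 := by
  simp only [weight, card_filter, Fin.sum_univ_succ, Fin.cons_zero, Fin.cons_succ]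
  split_ifs <;> simp_all [add_comm]

section Slice

variable {n : ℕ}

def sliceAt (A : Finset (Fin (n + 1) → ℕ)) (t : ℕ) : Finset (Fin n → ℕ) :=
  {a ∈ A | a 0 = t}.image Fin.tail

variable {A : Finset (Fin (n + 1) → ℕ)} {t : ℕ}

lemma mem_sliceAt {x : Fin n → ℕ} : x ∈ sliceAt A t ↔ Fin.cons t x ∈ A := by
  constructor
  · intro h
    obtain ⟨a, ha, rfl⟩ := mem_image.1 h
    rw [mem_filter] at ha
    rw [← ha.2, Fin.cons_self_tail]
    exact ha.1
  · intro h
    exact mem_image.2 ⟨_, mem_filter.2 ⟨h, Fin.cons_zero _ _⟩, Fin.tail_cons _ _⟩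

lemma sum_eq_sum_range_sum_sliceAt {N : ℕ} (hN : ∀ a ∈ A, a 0 < N)
    (f : (Fin (n + 1) → ℕ) → ℝ) :
    ∑ a ∈ A, f a = ∑ t ∈ range N, ∑ x ∈ sliceAt A t, f (Fin.cons t x) := by
  rw [← sum_fiberwise_of_maps_to (g := fun a => a 0) fun a ha => mem_range.2 (hN a ha)]
  refine sum_congr rfl fun t _ => ?_
  have hinj : Set.InjOn Fin.tail (({a ∈ A | a 0 = t} : Finset _) : Set (Fin (n + 1) → ℕ)) := by
    intro a ha b hb hab
    rw [mem_coe, mem_filter] at ha hb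
    rw [← Fin.cons_self_tail a, ← Fin.cons_self_tail b, hab, ha.2, hb.2]
  rw [sliceAt, sum_image hinj]
  refine sum_congr rfl fun a ha => ?_
  rw [← (mem_filter.1 ha).2, Fin.cons_self_tail]

lemma isLowerSet_sliceAt (hA : IsLowerSet (A : Set (Fin (n + 1) → ℕ))) (t : ℕ) :
    IsLowerSet (sliceAt A t : Set (Fin n → ℕ)) := fun _ _ hyx hx =>
  mem_sliceAt.2 (hA (Fin.cons_le_cons.2 ⟨le_rfl, hyx⟩) (mem_sliceAt.1 hx))

lemma sliceAt_subset_sliceAt_zero (hA : IsLowerSet (A : Set (Fin (n + 1) → ℕ))) (t : ℕ) :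
    sliceAt A t ⊆ sliceAt A 0 := fun _ hx =>
  mem_sliceAt.2 (hA (Fin.cons_le_cons.2 ⟨Nat.zero_le t, le_rfl⟩) (mem_sliceAt.1 hx))

end Slice

theorem two_mul_sum_weight_le_card_mul_logb_card :
    ∀ {n : ℕ} (A : Finset (Fin n → ℕ)), IsLowerSet (A : Set (Fin n → ℕ)) →
      2 * ∑ a ∈ A, (weight a : ℝ) ≤ #A * logb 2 #A
  | 0, A, _ => by
    have hA : #A ≤ 1 := (card_le_univ A).trans_eq (by simp)
    obtain hA | hA : #A = 0 ∨ #A = 1 := by omega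
    all_goals simp [hA, weight]
  | n + 1, A, hA => by
    set T := A.sup (· 0)
    have hT : ∀ a ∈ A, a 0 < T + 1 := fun a ha => Nat.lt_succ_of_le (le_sup (f := (· 0)) ha)
    set c : ℕ → ℝ := fun t => #(sliceAt A t)
    have hcard : (#A : ℝ) = c 0 + ∑ t ∈ range T, c (t + 1) := by
      rw [card_eq_sum_ones, Nat.cast_sum, sum_eq_sum_range_sum_sliceAt hT, sum_range_succ']
      simp [c, add_comm]
    have hweight : ∑ a ∈ A, (weight a : ℝ) =
        ∑ t ∈ range (T + 1), ∑ x ∈ sliceAt A t, (weight x : ℝ) + ∑ t ∈ range T, c (t + 1) := by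
      rw [sum_eq_sum_range_sum_sliceAt hT]
      simp only [weight_cons, Nat.cast_add, sum_add_distrib, add_right_inj]
      rw [sum_range_succ']
      simp [c]
    have hc : ∀ t ∈ range T, 0 ≤ c (t + 1) ∧ c (t + 1) ≤ c 0 := fun t _ =>
      ⟨Nat.cast_nonneg _, Nat.cast_le.2 (card_le_card (sliceAt_subset_sliceAt_zero hA _))⟩
    calc 2 * ∑ a ∈ A, (weight a : ℝ)
        = ∑ t ∈ range (T + 1), 2 * ∑ x ∈ sliceAt A t, (weight x : ℝ) +
            2 * ∑ t ∈ range T, c (t + 1) := by rw [hweight, mul_add, mul_sum]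
      _ ≤ ∑ t ∈ range (T + 1), c t * logb 2 (c t) + 2 * ∑ t ∈ range T, c (t + 1) := by
          gcongr ?_ + _
          exact sum_le_sum fun t _ =>
            two_mul_sum_weight_le_card_mul_logb_card _ (isLowerSet_sliceAt hA t)
      _ = c 0 * logb 2 (c 0) + ∑ t ∈ range T, c (t + 1) * logb 2 (c (t + 1)) +
            2 * ∑ t ∈ range T, c (t + 1) := by rw [sum_range_succ', add_comm (c 0 * _)]
      _ ≤ #A * logb 2 #A := by
          rw [hcard]
          exact mul_logb_add_sum_mul_logb_add_two_mul_sum_le _ _ hc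

theorem avg_weight_downset_general (n : ℕ)
    (A : Finset (Fin n → ℕ))
    (hdown : ∀ a ∈ A, ∀ z : Fin n → ℕ, (∀ i, z i ≤ a i) → z ∈ A) :
    (∑ a ∈ A, (weight a : ℝ)) / A.card ≤ (1 / 2) * Real.logb 2 A.card := by
  have hA : IsLowerSet (A : Set (Fin n → ℕ)) := fun a z hza ha => hdown a ha z hza
  have key := two_mul_sum_weight_le_card_mul_logb_card A hA
  have hlogb : 0 ≤ logb 2 A.card := div_nonneg (log_natCast_nonneg _) (log_nonneg one_le_two)
  refine div_le_of_le_mul₀ (Nat.cast_nonneg _) (by positivity) ?_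
  linarith

/-- **Theorem 3 (average weight in a downset).** If `n ≥ 1` and `A ⊆ ℤ_{≥0}^n` is a
finite non-empty downset, then `(1/|A|)·∑_{a ∈ A} w(a) ≤ (1/2)·log₂ |A|`. -/
theorem avg_weight_downset (n : ℕ) (hn : 1 ≤ n)
    (A : Finset (Fin n → ℕ)) (hA : A.Nonempty)
    (hdown : ∀ a ∈ A, ∀ z : Fin n → ℕ, (∀ i, z i ≤ a i) → z ∈ A) :
    (∑ a ∈ A, (weight a : ℝ)) / A.card ≤ (1 / 2) * Real.logb 2 A.card :=
  avg_weight_downset_general n A hdown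
end

section
/- Let S = {s₁,…,sₙ} be a finite independent generating subset of an abelian group G, and let A ⊆ G be finite, non-empty, and compressed with respect to S. For a ∈ G, let w(a) denote the number of non-zero summands in the unique representation a = z₁s₁ + ⋯ + zₙsₙ with zᵢ ∈ [0, ord sᵢ) when sᵢ has finite order and zᵢ ∈ ℤ otherwise. Then (1/|A|) · Σ_{a∈A} w(a) ≤ (1/2) · log₂|A|. -/
/-- A finite subset `S` of an abelian group is independent if whenever an integral linear
combination `∑_{s ∈ S} k(s)·s` vanishes, every summand `k(s)·s` vanishes. -/
def IsIndependent {G : Type*} [AddCommGroup G] (S : Finset G) : Prop :=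
  ∀ k : G → ℤ, ∑ s ∈ S, k s • s = 0 → ∀ s ∈ S, k s • s = 0

/-- The compression of a set `A` along `s` (relative to the complementary set
`T = S ∖ {s}`): in each coset `g + ⟨s⟩` with `g ∈ ⟨T⟩`, the set `A` is replaced by the
arithmetic progression `{g, g+s, …, g+(k_g-1)s}` where `k_g = |A ∩ (g + ⟨s⟩)|`. -/
def compress {G : Type*} [AddCommGroup G] (s : G) (T : Set G) (A : Set G) : Set G :=
  ⋃ g ∈ (AddSubgroup.closure T : Set G),
    {x : G | ∃ k : ℕ, x = g + k • s ∧
      k < Nat.card {a : G // a ∈ A ∧ a - g ∈ AddSubgroup.zmultiples s}}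

/-!
Write `a ∈ A` in its canonical coordinates `z a`. Since `A` is compressed along `s`, it contains,
together with `a`, the point of `a + ⟨s⟩` lying in `⟨S ∖ {s}⟩`; by independence that point has
the coordinates of `a` with the `s`-coordinate replaced by `0`. So the number of `a ∈ A` with
`z a s ≠ 0` is `#A` minus the number of lines parallel to `s` that meet `A`, which by
`2 (k - 1) ≤ k log₂ k` is at most half the sum over `a ∈ A` of `log₂` of the number of points
of `A` on the line through `a`. For `X` uniform on `A` that sum is `#A · H(X_s | X_{S ∖ s})`,
and Han's inequality `∑ₛ H(X_s | X_{S ∖ s}) ≤ H(X) = log₂ #A` concludes.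
-/

open Finset Real

section FiberCard

variable {α β γ δ : Type*} [DecidableEq β] [DecidableEq γ] [DecidableEq δ] {A : Finset α}

def fiberCard (A : Finset α) (p : α → β) (a : α) : ℕ := #{b ∈ A | p b = p a}

lemma fiberCard_pos {p : α → β} {a : α} (ha : a ∈ A) : 0 < fiberCard A p a :=
  card_pos.2 ⟨a, mem_filter.2 ⟨ha, rfl⟩⟩

lemma fiberCard_congr {p : α → β} {a a' : α} (h : p a = p a') :
    fiberCard A p a = fiberCard A p a' := by
  simp only [fiberCard, h]

lemma fiberCard_eq_of_iff {p : α → β} {q : α → γ} {a : α} (h : ∀ b ∈ A, p b = p a ↔ q b = q a) :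
    fiberCard A p a = fiberCard A q a := by
  rw [fiberCard, fiberCard, filter_congr h]

lemma sum_fiber_inv_fiberCard_le (p : α → β) (v : β) :
    ∑ a ∈ A with p a = v, (fiberCard A p a : ℝ)⁻¹ ≤ 1 := by
  have hcard : ∀ a ∈ A.filter (p · = v), fiberCard A p a = #{b ∈ A | p b = v} := by
    intro a ha
    rw [fiberCard, (mem_filter.1 ha).2]
  rw [sum_congr rfl fun a ha => by rw [hcard a ha], sum_const, nsmul_eq_mul]
  exact mul_inv_le_one

lemma sum_inv_fiberCard_mul_fiberCard_le (p : α → β) (q : α → γ) (r : α → δ) (b c : α) :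
    ∑ a ∈ A with q a = q b ∧ p a = p c ∧ r a = r c,
      ((fiberCard A p a : ℝ) * fiberCard A (fun x => (q x, r x)) a)⁻¹ ≤
        (fiberCard A p c : ℝ)⁻¹ :=
  calc _ = ∑ a ∈ A with q a = q b ∧ p a = p c ∧ r a = r c,
          (fiberCard A p c : ℝ)⁻¹ * (fiberCard A (fun x => (q x, r x)) a : ℝ)⁻¹ :=
        sum_congr rfl fun a ha => by rw [mul_inv, fiberCard_congr (mem_filter.1 ha).2.2.1]
    _ ≤ ∑ a ∈ A with (q a, r a) = (q b, r c),
          (fiberCard A p c : ℝ)⁻¹ * (fiberCard A (fun x => (q x, r x)) a : ℝ)⁻¹ := by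
        refine sum_le_sum_of_subset_of_nonneg (fun a => ?_) fun _ _ _ => by positivity
        simp only [mem_filter, Prod.mk.injEq]
        tauto
    _ ≤ (fiberCard A p c : ℝ)⁻¹ * 1 := by
        rw [← mul_sum]
        exact mul_le_mul_of_nonneg_left (sum_fiber_inv_fiberCard_le _ _) (by positivity)
    _ = _ := mul_one _

lemma sum_fiberCard_mul_div_le {p : α → β} {q : α → γ} (r : α → δ)
    (hqp : ∀ a ∈ A, ∀ b ∈ A, q a = q b → p a = p b) :
    ∑ a ∈ A, (fiberCard A q a * fiberCard A (fun x => (p x, r x)) a : ℝ) /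
      (fiberCard A p a * fiberCard A (fun x => (q x, r x)) a) ≤ #A := by
  set w : α → ℝ := fun a => (fiberCard A p a * fiberCard A (fun x => (q x, r x)) a : ℝ)⁻¹
  have hexpand : ∀ a ∈ A, (fiberCard A q a * fiberCard A (fun x => (p x, r x)) a : ℝ) /
      (fiberCard A p a * fiberCard A (fun x => (q x, r x)) a) =
      ∑ b ∈ A, ∑ c ∈ A, if q a = q b ∧ p a = p c ∧ r a = r c then w a else 0 := by
    intro a _
    have hq : (fiberCard A q a : ℝ) = ∑ b ∈ A, if q a = q b then 1 else 0 := by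
      simp only [fiberCard, natCast_card_filter, eq_comm]
    have hpr : (fiberCard A (fun x => (p x, r x)) a : ℝ) =
        ∑ c ∈ A, if p a = p c ∧ r a = r c then 1 else 0 := by
      simp only [fiberCard, natCast_card_filter, Prod.mk.injEq, eq_comm]
    rw [div_eq_mul_inv, hq, hpr, sum_mul_sum, sum_mul]
    simp only [sum_mul, ite_mul, one_mul, zero_mul, ← ite_and, w]
  calc _ = ∑ b ∈ A, ∑ c ∈ A, ∑ a ∈ A with q a = q b ∧ p a = p c ∧ r a = r c, w a := by
        rw [sum_congr rfl hexpand, sum_comm]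
        exact sum_congr rfl fun b _ => by rw [sum_comm]; simp only [sum_filter]
    _ = ∑ b ∈ A, ∑ c ∈ A with p c = p b, ∑ a ∈ A with q a = q b ∧ p a = p c ∧ r a = r c,
          w a := by
        refine sum_congr rfl fun b hb => (sum_filter_of_ne fun c _ hne => ?_).symm
        obtain ⟨a, ha⟩ := nonempty_of_sum_ne_zero hne
        obtain ⟨haA, hqa, hpa, -⟩ := mem_filter.1 ha
        exact hpa.symm.trans (hqp a haA b hb hqa)
    _ ≤ ∑ b ∈ A, ∑ c ∈ A with p c = p b, (fiberCard A p c : ℝ)⁻¹ := by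
        gcongr with b _ c
        exact sum_inv_fiberCard_mul_fiberCard_le p q r b c
    _ ≤ ∑ _b ∈ A, 1 := sum_le_sum fun b _ => sum_fiber_inv_fiberCard_le p (p b)
    _ = #A := by simp

/-- For `X` uniform on `A`: `H(r X | q X) ≤ H(r X | p X)` when `q` is finer than `p`. -/
lemma sum_log_fiberCard_sub_le {p : α → β} {q : α → γ} (r : α → δ)
    (hqp : ∀ a ∈ A, ∀ b ∈ A, q a = q b → p a = p b) :
    ∑ a ∈ A, (log (fiberCard A q a) - log (fiberCard A (fun x => (q x, r x)) a)) ≤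
      ∑ a ∈ A, (log (fiberCard A p a) - log (fiberCard A (fun x => (p x, r x)) a)) := by
  rw [← sub_nonpos, ← sum_sub_distrib]
  calc _ ≤ ∑ a ∈ A, ((fiberCard A q a * fiberCard A (fun x => (p x, r x)) a : ℝ) /
        (fiberCard A p a * fiberCard A (fun x => (q x, r x)) a) - 1) := by
        refine sum_le_sum fun a ha => ?_
        have h₁ : (0 : ℝ) < fiberCard A q a := mod_cast fiberCard_pos ha
        have h₂ : (0 : ℝ) < fiberCard A (fun x => (p x, r x)) a := mod_cast fiberCard_pos ha
        have h₃ : (0 : ℝ) < fiberCard A p a := mod_cast fiberCard_pos ha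
        have h₄ : (0 : ℝ) < fiberCard A (fun x => (q x, r x)) a := mod_cast fiberCard_pos ha
        have := log_le_sub_one_of_pos (by positivity :
          (0 : ℝ) < (fiberCard A q a * fiberCard A (fun x => (p x, r x)) a : ℝ) /
            (fiberCard A p a * fiberCard A (fun x => (q x, r x)) a))
        rw [log_div (by positivity) (by positivity), log_mul h₁.ne' h₂.ne',
          log_mul h₃.ne' h₄.ne'] at this
        linarith
    _ ≤ 0 := by
        rw [sum_sub_distrib, sum_const, nsmul_one, sub_nonpos]
        exact sum_fiberCard_mul_div_le r hqp

end FiberCard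

lemma Finset.restrict_eq_restrict_iff {ι β : Type*} {J : Finset ι} {x y : ι → β} :
    J.restrict x = J.restrict y ↔ ∀ j ∈ J, x j = y j := by
  simp [funext_iff]

section Han

variable {α ι β : Type*} [DecidableEq ι] [DecidableEq β] (A : Finset α) (f : α → ι → β)

/-- For `X` uniform on `A`, this is `#A * (log #A - H(J.restrict (f X)))`. -/
noncomputable def sumLogFiberCard (J : Finset ι) : ℝ :=
  ∑ a ∈ A, log (fiberCard A (fun b => J.restrict (f b)) a)

lemma sumLogFiberCard_sub_insert_le {J J' : Finset ι} (hJ : J ⊆ J') (i : ι) :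
    sumLogFiberCard A f J' - sumLogFiberCard A f (insert i J') ≤
      sumLogFiberCard A f J - sumLogFiberCard A f (insert i J) := by
  have hpair (K : Finset ι) (a : α) :
      fiberCard A (fun b => (K.restrict (f b), f b i)) a =
        fiberCard A (fun b => (insert i K).restrict (f b)) a :=
    fiberCard_eq_of_iff fun b _ => by
      simp only [Prod.mk.injEq, restrict_eq_restrict_iff, forall_mem_insert]
      exact and_comm
  simp only [sumLogFiberCard, ← sum_sub_distrib, ← hpair]
  exact sum_log_fiberCard_sub_le _ fun a _ b _ hab =>
    restrict_eq_restrict_iff.2 fun j hj => restrict_eq_restrict_iff.1 hab j (hJ hj)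

theorem sum_sumLogFiberCard_erase_sub_le (I : Finset ι) :
    ∑ i ∈ I, (sumLogFiberCard A f (I.erase i) - sumLogFiberCard A f I) ≤
      sumLogFiberCard A f ∅ - sumLogFiberCard A f I := by
  induction I using Finset.induction_on with
  | empty => simp
  | insert x I hx ih =>
    have hstep : ∀ i ∈ I,
        sumLogFiberCard A f ((insert x I).erase i) - sumLogFiberCard A f (insert x I) ≤
          sumLogFiberCard A f (I.erase i) - sumLogFiberCard A f I := fun i hi => by
      have h := sumLogFiberCard_sub_insert_le A f (subset_insert x (I.erase i)) i
      rwa [insert_comm, insert_erase hi,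
        ← erase_insert_of_ne (ne_of_mem_of_not_mem hi hx).symm] at h
    rw [sum_insert hx, erase_insert hx]
    linarith [sum_le_sum hstep]

theorem sum_sumLogFiberCard_erase_le (I : Finset ι)
    (hinj : Set.InjOn (fun a => I.restrict (f a)) A) :
    ∑ i ∈ I, sumLogFiberCard A f (I.erase i) ≤ #A * log #A := by
  have hfull : sumLogFiberCard A f I = 0 := by
    refine sum_eq_zero fun a ha => ?_
    have : {b ∈ A | I.restrict (f b) = I.restrict (f a)} = {a} :=
      eq_singleton_iff_unique_mem.2 ⟨mem_filter.2 ⟨ha, rfl⟩,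
        fun b hb => hinj (mem_filter.1 hb).1 ha (mem_filter.1 hb).2⟩
    simp [fiberCard, this]
  have hempty : sumLogFiberCard A f ∅ = #A * log #A := by
    have hall (a : α) :
        {b ∈ A | (∅ : Finset ι).restrict (f b) = (∅ : Finset ι).restrict (f a)} = A :=
      filter_true_of_mem fun _ _ => Subsingleton.elim _ _
    simp [sumLogFiberCard, fiberCard, hall]
  simpa [hfull, hempty] using sum_sumLogFiberCard_erase_sub_le A f I

end Han

lemma four_pow_pred_le_pow_self (k : ℕ) : 4 ^ (k - 1) ≤ k ^ k := by
  rcases lt_or_ge k 4 with hk | hk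
  · interval_cases k <;> decide
  · calc 4 ^ (k - 1) ≤ 4 ^ k := Nat.pow_le_pow_right (by norm_num) (k.sub_le 1)
      _ ≤ k ^ k := Nat.pow_le_pow_left hk k

lemma two_mul_sub_one_le_mul_logb (k : ℕ) : 2 * ((k : ℝ) - 1) ≤ k * logb 2 k := by
  rcases Nat.eq_zero_or_pos k with rfl | hk
  · norm_num
  have h := logb_le_logb_of_le one_lt_two (by positivity)
    (mod_cast four_pow_pred_le_pow_self k : ((4 : ℕ) : ℝ) ^ (k - 1) ≤ (k : ℝ) ^ k)
  rw [logb_pow, logb_pow, Nat.cast_pred hk, Nat.cast_ofNat,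
    show (4 : ℝ) = 2 ^ 2 by norm_num, logb_pow, logb_self_eq_one one_lt_two] at h
  push_cast at h
  linarith

lemma two_mul_card_sub_card_image_le {α β : Type*} [DecidableEq β] (A : Finset α) (p : α → β) :
    2 * ((#A : ℝ) - #(A.image p)) ≤ ∑ a ∈ A, logb 2 (fiberCard A p a) := by
  calc 2 * ((#A : ℝ) - #(A.image p))
      = ∑ v ∈ A.image p, 2 * ((#{a ∈ A | p a = v} : ℝ) - 1) := by
        rw [card_eq_sum_card_image p A]
        simp [mul_sum, mul_sub, mul_comm]
    _ ≤ ∑ v ∈ A.image p, (#{a ∈ A | p a = v} : ℝ) * logb 2 #{a ∈ A | p a = v} :=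
        sum_le_sum fun v _ => two_mul_sub_one_le_mul_logb _
    _ = ∑ v ∈ A.image p, ∑ a ∈ A with p a = v, logb 2 (fiberCard A p a) := by
        refine sum_congr rfl fun v _ => ?_
        rw [sum_congr rfl fun a ha => by rw [fiberCard, (mem_filter.1 ha).2], sum_const,
          nsmul_eq_mul]
    _ = ∑ a ∈ A, logb 2 (fiberCard A p a) :=
        sum_fiberwise_of_maps_to (fun a ha => mem_image_of_mem p ha) _

section Coefficients

variable {G : Type*} [AddCommGroup G]

lemma eq_of_zsmul_eq_zsmul {s : G} {m n : ℤ}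
    (hm : IsOfFinAddOrder s → 0 ≤ m ∧ m < addOrderOf s)
    (hn : IsOfFinAddOrder s → 0 ≤ n ∧ n < addOrderOf s) (h : m • s = n • s) : m = n := by
  rw [zsmul_eq_zsmul_iff_modEq] at h
  by_cases hs : IsOfFinAddOrder s
  · obtain ⟨hm₀, hm₁⟩ := hm hs
    obtain ⟨hn₀, hn₁⟩ := hn hs
    rwa [Int.ModEq, Int.emod_eq_of_lt hm₀ hm₁, Int.emod_eq_of_lt hn₀ hn₁] at h
  · rwa [addOrderOf_eq_zero hs, Nat.cast_zero, Int.modEq_zero_iff] at h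

lemma exists_sum_eq_of_mem_closure {T : Finset G} {x : G}
    (hx : x ∈ AddSubgroup.closure (T : Set G)) :
    ∃ m : G → ℤ, Function.support m ⊆ T ∧ ∑ t ∈ T, m t • t = x := by
  rw [← Submodule.mem_span_finset, ← AddSubgroup.toIntSubmodule_closure]
  exact hx

lemma IsIndependent.coeff_eq_of_sub_mem_closure [DecidableEq G] {S T : Finset G}
    (hS : IsIndependent S) (hTS : T ⊆ S) {z z' : G → ℤ}
    (hz : ∀ s ∈ S, IsOfFinAddOrder s → 0 ≤ z s ∧ z s < addOrderOf s)
    (hz' : ∀ s ∈ S, IsOfFinAddOrder s → 0 ≤ z' s ∧ z' s < addOrderOf s)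
    (h : ∑ s ∈ S, z s • s - ∑ s ∈ S, z' s • s ∈ AddSubgroup.closure (T : Set G))
    {s : G} (hs : s ∈ S) (hsT : s ∉ T) : z s = z' s := by
  obtain ⟨m, hmT, hm⟩ := exists_sum_eq_of_mem_closure h
  have hmS : ∑ t ∈ S, m t • t = ∑ t ∈ T, m t • t := (sum_subset hTS fun t _ ht => by
    rw [Function.notMem_support.1 (mt (@hmT t) ht), zero_zsmul]).symm
  have hsum : ∑ t ∈ S, (z t - z' t - m t) • t = 0 := by
    simp only [sub_smul, sum_sub_distrib]
    rw [hmS, hm, sub_self]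
  have hms : m s = 0 := Function.notMem_support.1 (mt (@hmT s) hsT)
  have := hS _ hsum s hs
  rw [hms, sub_zero, sub_smul, sub_eq_zero] at this
  exact eq_of_zsmul_eq_zsmul (hz s hs) (hz' s hs) this

lemma exists_add_nsmul_of_compress_eq {s : G} {T A : Set G} (hA : compress s T A = A)
    {a : G} (ha : a ∈ A) : ∃ g ∈ AddSubgroup.closure T, g ∈ A ∧ ∃ k : ℕ, a = g + k • s := by
  rw [← hA] at ha
  simp only [compress, Set.mem_iUnion, Set.mem_ofPred_eq] at ha
  obtain ⟨g, hg, k, rfl, hk⟩ := ha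
  refine ⟨g, hg, ?_, k, rfl⟩
  rw [← hA]
  simp only [compress, Set.mem_iUnion, Set.mem_ofPred_eq]
  exact ⟨g, hg, 0, by simp, k.zero_le.trans_lt hk⟩

lemma IsIndependent.exists_coeff_eq_zero_of_compress_eq [DecidableEq G] {S : Finset G}
    (hS : IsIndependent S) {i : G} (hi : i ∈ S) {A : Set G}
    (hA : compress i (S.erase i : Set G) A = A) {z : G → G → ℤ}
    (hrep : ∀ a ∈ A, a = ∑ s ∈ S, z a s • s)
    (hz : ∀ a ∈ A, ∀ s ∈ S, IsOfFinAddOrder s → 0 ≤ z a s ∧ z a s < addOrderOf s)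
    {a : G} (ha : a ∈ A) : ∃ b ∈ A, z b i = 0 ∧ ∀ s ∈ S.erase i, z b s = z a s := by
  obtain ⟨b, hb, hbA, k, rfl⟩ := exists_add_nsmul_of_compress_eq hA ha
  have hzero : ∀ s ∈ S, IsOfFinAddOrder s → 0 ≤ (0 : ℤ) ∧ (0 : ℤ) < addOrderOf s :=
    fun s _ hs => ⟨le_rfl, mod_cast hs.addOrderOf_pos⟩
  refine ⟨b, hbA, ?_, fun s hs => ?_⟩
  · refine hS.coeff_eq_of_sub_mem_closure (erase_subset i S) (hz b hbA) hzero ?_ hi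
      (notMem_erase i S)
    simpa [← hrep b hbA] using hb
  · refine hS.coeff_eq_of_sub_mem_closure (singleton_subset_iff.2 hi) (hz b hbA)
      (hz _ ha) ?_ (mem_of_mem_erase hs) (by simpa using ne_of_mem_erase hs)
    rw [← hrep b hbA, ← hrep _ ha, sub_add_cancel_left, coe_singleton,
      ← AddSubgroup.zmultiples_eq_closure]
    exact neg_mem (AddSubgroup.nsmul_mem_zmultiples i k)

end Coefficients

lemma card_filter_eq_zero_eq_card_image {α ι β : Type*} [DecidableEq ι] [DecidableEq β] [Zero β]
    {A : Finset α} {z : α → ι → β} {I : Finset ι} (hinj : Set.InjOn (fun a => I.restrict (z a)) A)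
    {i : ι} (hzero : ∀ a ∈ A, ∃ b ∈ A, z b i = 0 ∧ ∀ j ∈ I.erase i, z b j = z a j) :
    #{a ∈ A | z a i = 0} = #(A.image fun a => (I.erase i).restrict (z a)) := by
  have hinj' : Set.InjOn (fun a => (I.erase i).restrict (z a)) ↑{a ∈ A | z a i = 0} := by
    intro a ha b hb hab
    rw [mem_coe, mem_filter] at ha hb
    refine hinj ha.1 hb.1 (restrict_eq_restrict_iff.2 fun j hj => ?_)
    rcases eq_or_ne j i with rfl | hji
    · rw [ha.2, hb.2]
    · exact restrict_eq_restrict_iff.1 hab j (mem_erase.2 ⟨hji, hj⟩)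
  rw [← card_image_of_injOn hinj']
  refine congrArg card (Subset.antisymm (image_subset_image (filter_subset _ _)) ?_)
  intro v hv
  obtain ⟨a, ha, rfl⟩ := mem_image.1 hv
  obtain ⟨b, hb, hb0, hba⟩ := hzero a ha
  exact mem_image.2 ⟨b, mem_filter.2 ⟨hb, hb0⟩, restrict_eq_restrict_iff.2 hba⟩

theorem sum_card_filter_ne_zero_le {α ι β : Type*} [DecidableEq ι] [DecidableEq β] [Zero β]
    (A : Finset α) (z : α → ι → β) (I : Finset ι)
    (hinj : Set.InjOn (fun a => I.restrict (z a)) A)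
    (hzero : ∀ i ∈ I, ∀ a ∈ A, ∃ b ∈ A, z b i = 0 ∧ ∀ j ∈ I.erase i, z b j = z a j) :
    ∑ a ∈ A, (#{i ∈ I | z a i ≠ 0} : ℝ) ≤ #A * logb 2 #A / 2 := by
  have hcount (i : ι) (hi : i ∈ I) :
      (#{a ∈ A | z a i ≠ 0} : ℝ) = #A - #(A.image fun a => (I.erase i).restrict (z a)) := by
    rw [← card_filter_eq_zero_eq_card_image hinj (hzero i hi), eq_sub_iff_add_eq, add_comm]
    exact_mod_cast card_filter_add_card_filter_not _
  calc ∑ a ∈ A, (#{i ∈ I | z a i ≠ 0} : ℝ) = ∑ i ∈ I, (#{a ∈ A | z a i ≠ 0} : ℝ) := by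
        simp only [natCast_card_filter]
        exact sum_comm
    _ ≤ ∑ i ∈ I, (∑ a ∈ A, logb 2 (fiberCard A (fun b => (I.erase i).restrict (z b)) a)) / 2 :=
        sum_le_sum fun i hi => by
          rw [hcount i hi]
          linarith [two_mul_card_sub_card_image_le A fun b => (I.erase i).restrict (z b)]
    _ = (∑ i ∈ I, sumLogFiberCard A z (I.erase i)) / log 2 / 2 := by
        simp only [sumLogFiberCard, logb, ← sum_div]
    _ ≤ #A * log #A / log 2 / 2 := by
        gcongr
        exact sum_sumLogFiberCard_erase_le A z I hinj
    _ = #A * logb 2 #A / 2 := by rw [logb, mul_div_assoc]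

theorem avg_weight_compressed_general {G : Type*} [AddCommGroup G] [DecidableEq G]
    (S : Finset G) (hind : IsIndependent S)
    (A : Finset G)
    (hcomp : ∀ s ∈ S, compress s (↑(S.erase s)) (↑A : Set G) = (↑A : Set G))
    (w : G → ℕ)
    (hw : ∀ a ∈ A, ∃ z : G → ℤ,
      a = ∑ s ∈ S, z s • s ∧
      (∀ s ∈ S, IsOfFinAddOrder s → 0 ≤ z s ∧ z s < (addOrderOf s : ℤ)) ∧
      w a = (S.filter (fun s => z s ≠ 0)).card) :
    (∑ a ∈ A, (w a : ℝ)) / A.card ≤ (1 / 2) * Real.logb 2 A.card := by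
  choose! z hrep hz hwz using hw
  have hinj : Set.InjOn (fun a => S.restrict (z a)) A := fun a ha b hb hab => by
    rw [hrep a ha, hrep b hb]
    exact sum_congr rfl fun s hs => by rw [restrict_eq_restrict_iff.1 hab s hs]
  have hsum : ∑ a ∈ A, (w a : ℝ) ≤ #A * logb 2 #A / 2 := by
    rw [sum_congr rfl fun a ha => by rw [hwz a ha]]
    exact sum_card_filter_ne_zero_le A z S hinj fun i hi a ha =>
      hind.exists_coeff_eq_zero_of_compress_eq hi (hcomp i hi) hrep hz ha
  have hlog : 0 ≤ logb 2 #A := div_nonneg (log_natCast_nonneg _) (log_nonneg one_le_two)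
  exact div_le_of_le_mul₀ (by positivity) (by positivity) (by linarith)

/-- **Corollary (average weight, general groups).** Let `S` be a finite independent
generating subset of an abelian group `G`, and let `A ⊆ G` be finite, non-empty, and
compressed with respect to `S`. For `a ∈ G`, let `w(a)` be the number of non-zero
summands in the unique representation `a = ∑_{s ∈ S} z_s·s` with `z_s ∈ [0, ord s)` when
`s` has finite order and `z_s ∈ ℤ` otherwise. Then
`(1/|A|)·∑_{a ∈ A} w(a) ≤ (1/2)·log₂ |A|`. -/
theorem avg_weight_compressed {G : Type*} [AddCommGroup G] [DecidableEq G]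
    (S : Finset G) (hind : IsIndependent S)
    (hgen : AddSubgroup.closure (S : Set G) = ⊤)
    (A : Finset G) (hA : A.Nonempty)
    (hcomp : ∀ s ∈ S, compress s (↑(S.erase s)) (↑A : Set G) = (↑A : Set G))
    (w : G → ℕ)
    (hw : ∀ a ∈ A, ∃ z : G → ℤ,
      a = ∑ s ∈ S, z s • s ∧
      (∀ s ∈ S, IsOfFinAddOrder s → 0 ≤ z s ∧ z s < (addOrderOf s : ℤ)) ∧
      w a = (S.filter (fun s => z s ≠ 0)).card) :
    (∑ a ∈ A, (w a : ℝ)) / A.card ≤ (1 / 2) * Real.logb 2 A.card :=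
  avg_weight_compressed_general S hind A hcomp w hw
end

section
/- Let S = {s₁,…,sₙ} be a finite independent generating subset of an abelian group G, let A ⊆ G be finite, and let i, j ∈ [1,n]. If A is i-compressed, then the compression [A]_j of A along s_j is also i-compressed. -/
/-!
Let `H = ⟨S ∖ {s}⟩`; independence makes `H ∩ ⟨s⟩ = 0`. A finite set `B ⊆ H + ℕ s` is
`s`-compressed as soon as `x - s ∈ B` for every `x ∈ B ∖ H`: walking down from any point of the
slice of `B` in a coset `g + ⟨s⟩` reaches `g` without gaps, so the slice is already the
progression `g, g + s, …`. A compressed `A` has this property along `sᵢ`, and compressing along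
`sⱼ` keeps it, because `a ↦ a - sᵢ` embeds the slice of `A` in `g + ⟨sⱼ⟩` into its slice in
`g - sᵢ + ⟨sⱼ⟩`, so the progressions of `[A]ⱼ` can only get longer in the direction of `-sᵢ`.
-/

namespace Compression

variable {G : Type*} [AddCommGroup G]

def cosetSlice (s : G) (B : Set G) (g : G) : Set G :=
  {a ∈ B | a - g ∈ AddSubgroup.zmultiples s}

theorem mem_compress {s x : G} {T B : Set G} :
    x ∈ compress s T B ↔
      ∃ g ∈ AddSubgroup.closure T, ∃ k : ℕ, x = g + k • s ∧ k < (cosetSlice s B g).ncard := by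
  simp only [compress, Set.mem_iUnion, SetLike.mem_coe, Set.mem_ofPred_eq, exists_prop, cosetSlice,
    ← Nat.card_coe_set_eq]
  rfl

theorem cosetSlice_subset (s : G) (B : Set G) (g : G) : cosetSlice s B g ⊆ B :=
  Set.sep_subset _ _

theorem subset_image_Iio_of_add_nsmul_notMem {g s : G} {C : Set G}
    (hrep : C ⊆ Set.range fun m : ℕ => g + m • s) (hdown : ∀ x ∈ C, x ≠ g → x - s ∈ C) {k : ℕ}
    (hk : g + k • s ∉ C) : C ⊆ (fun m : ℕ => g + m • s) '' Set.Iio k := by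
  set φ : ℕ → G := fun m => g + m • s
  -- walking down from any point of `C` reaches `g = φ 0` without meeting the gap `φ k`
  have reach : ∀ m, φ m ∈ C → ∃ j < k, φ j = φ m := by
    have of_eq_g : ∀ m, φ m ∈ C → φ m = g → ∃ j < k, φ j = φ m := fun m hm hmg =>
      ⟨0, Nat.pos_of_ne_zero fun hk0 => hk (by simpa [φ, hk0, hmg] using hm),
        by rw [hmg]; simp [φ]⟩
    intro m
    induction m with
    | zero => exact fun h0 => of_eq_g 0 h0 (by simp [φ])
    | succ m ih =>
      intro hm
      by_cases hmg : φ (m + 1) = g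
      · exact of_eq_g _ hm hmg
      have hsub : φ m = φ (m + 1) - s := by simp only [φ, succ_nsmul]; abel
      obtain ⟨j, hj, hjm⟩ := ih (hsub ▸ hdown _ hm hmg)
      have hj1 : φ (j + 1) = φ (m + 1) := by
        simp only [φ, succ_nsmul, ← add_assoc] at hjm ⊢
        rw [hjm]
      exact ⟨j + 1, lt_of_le_of_ne hj fun h => hk (show φ k ∈ C from h ▸ hj1 ▸ hm), hj1⟩
  intro x hx
  obtain ⟨m, rfl⟩ := hrep hx
  exact reach m hx

theorem eq_image_Iio_ncard_of_sub_mem {g s : G} {C : Set G} (hC : C.Finite)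
    (hrep : C ⊆ Set.range fun k : ℕ => g + k • s) (hdown : ∀ x ∈ C, x ≠ g → x - s ∈ C) :
    C = (fun k : ℕ => g + k • s) '' Set.Iio C.ncard := by
  set φ : ℕ → G := fun k => g + k • s
  have ncard_le : ∀ m, C ⊆ φ '' Set.Iio m → C.ncard ≤ m := fun m h =>
    calc C.ncard ≤ (φ '' Set.Iio m).ncard := Set.ncard_le_ncard h ((Set.finite_Iio m).image φ)
      _ ≤ m := (Set.ncard_image_le (Set.finite_Iio m)).trans (by simp)
  have mem : ∀ k < C.ncard, φ k ∈ C := fun k hk => by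
    by_contra hkC
    exact (ncard_le k (subset_image_Iio_of_add_nsmul_notMem hrep hdown hkC)).not_gt hk
  have inj : Set.InjOn φ (Set.Iio C.ncard) := by
    by_cases hs : IsOfFinAddOrder s
    · have hle : C.ncard ≤ addOrderOf s := ncard_le _ fun x hx => by
        obtain ⟨m, rfl⟩ := hrep hx
        exact ⟨m % addOrderOf s, Nat.mod_lt _ hs.addOrderOf_pos, by simp [φ, mod_addOrderOf_nsmul]⟩
      exact ((add_right_injective g).comp_injOn nsmul_injOn_Iio_addOrderOf).mono
        (Set.Iio_subset_Iio hle)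
    · exact ((add_right_injective g).comp (injective_nsmul_iff_not_isOfFinAddOrder.mpr hs)).injOn
  refine (Set.eq_of_subset_of_ncard_le ?_ ?_ hC).symm
  · rintro _ ⟨k, hk, rfl⟩
    exact mem k hk
  · rw [inj.ncard_image]
    simp

theorem eq_of_sub_mem_zmultiples {H : AddSubgroup G} {s : G} (hHs : Disjoint H (.zmultiples s))
    {a g g' : G} (hg : g ∈ H) (hg' : g' ∈ H) (ha : a - g ∈ AddSubgroup.zmultiples s)
    (ha' : a - g' ∈ AddSubgroup.zmultiples s) : g = g' := by
  refine sub_eq_zero.mp (AddSubgroup.disjoint_def.mp hHs (sub_mem hg hg') ?_)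
  simpa using sub_mem ha' ha

theorem IsIndependent.disjoint_closure_erase [DecidableEq G] {S : Finset G} (hS : IsIndependent S)
    {s : G} (hs : s ∈ S) :
    Disjoint (AddSubgroup.closure ((S.erase s : Finset G) : Set G)) (.zmultiples s) := by
  refine AddSubgroup.disjoint_def.mpr fun {x} hx hxs => ?_
  obtain ⟨c, rfl⟩ := AddSubgroup.mem_zmultiples_iff.mp hxs
  rw [← Submodule.span_int_eq_addSubgroupClosure, Submodule.mem_toAddSubgroup,
    Submodule.mem_span_finset] at hx
  obtain ⟨f, -, hf⟩ := hx
  have hsum : ∑ u ∈ S, Function.update f s (-c) u • u = 0 := by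
    rw [← Finset.sum_erase_add _ _ hs, Finset.sum_congr rfl fun u hu =>
      by rw [Function.update_of_ne (Finset.ne_of_mem_erase hu)], hf]
    simp
  simpa using hS _ hsum s hs

def DownClosedAlong (s : G) (H : AddSubgroup G) (B : Set G) : Prop :=
  ∀ x ∈ B, x ∉ H → x - s ∈ B

theorem downClosedAlong_of_compress_eq_self {s : G} {T B : Set G} (h : compress s T B = B) :
    DownClosedAlong s (.closure T) B := by
  intro x hx hxH
  rw [← h] at hx ⊢
  obtain ⟨g, hg, k, rfl, hk⟩ := mem_compress.mp hx
  obtain _ | k := k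
  · simp [hg] at hxH
  · exact mem_compress.mpr ⟨g, hg, k, by rw [succ_nsmul]; abel, by omega⟩

theorem exists_sub_mem_zmultiples_of_mem_compress {s x : G} {T B : Set G}
    (hx : x ∈ compress s T B) : ∃ a ∈ B, x - a ∈ AddSubgroup.zmultiples s := by
  obtain ⟨g, -, k, rfl, hk⟩ := mem_compress.mp hx
  obtain ⟨a, ha, hag⟩ := Set.nonempty_of_ncard_ne_zero (by omega : (cosetSlice s B g).ncard ≠ 0)
  refine ⟨a, ha, ?_⟩
  rw [show g + k • s - a = k • s - (a - g) by abel]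
  exact sub_mem (AddSubgroup.nsmul_mem_zmultiples s k) hag

theorem compress_finite {s : G} {T B : Set G}
    (hTs : Disjoint (AddSubgroup.closure T) (.zmultiples s)) (hB : B.Finite) :
    (compress s T B).Finite := by
  refine (hB.biUnion fun a _ => (Set.finite_Iio B.ncard).biUnion fun k _ =>
    Set.Subsingleton.finite (s := {x | ∃ g ∈ AddSubgroup.closure T,
      a - g ∈ AddSubgroup.zmultiples s ∧ x = g + k • s}) ?_).subset ?_
  · rintro _ ⟨g, hg, hag, rfl⟩ _ ⟨g', hg', hag', rfl⟩
    rw [eq_of_sub_mem_zmultiples hTs hg hg' hag hag']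
  · intro x hx
    obtain ⟨g, hg, k, rfl, hk⟩ := mem_compress.mp hx
    obtain ⟨a, ha, hag⟩ := Set.nonempty_of_ncard_ne_zero (by omega : (cosetSlice s B g).ncard ≠ 0)
    simp only [Set.mem_iUnion]
    exact ⟨a, ha, k, hk.trans_le (Set.ncard_le_ncard (cosetSlice_subset _ _ _) hB), g, hg, hag, rfl⟩

theorem ncard_cosetSlice_le_sub {H : AddSubgroup G} {s t g : G} {A : Set G}
    (hA : DownClosedAlong t H A) (hAfin : A.Finite) (hs : s ∈ H) (hg : g ∉ H) :
    (cosetSlice s A g).ncard ≤ (cosetSlice s A (g - t)).ncard := by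
  refine Set.ncard_le_ncard_of_injOn (· - t) (fun a ⟨haA, hag⟩ => ⟨hA a haA fun haH => hg ?_,
    by simpa [sub_sub_sub_cancel_right] using hag⟩) sub_left_injective.injOn
    (hAfin.subset (cosetSlice_subset _ _ _))
  simpa using sub_mem haH (AddSubgroup.zmultiples_le_of_mem hs hag)

theorem DownClosedAlong.compress {H : AddSubgroup G} {s t : G} {T A : Set G}
    (hA : DownClosedAlong t H A) (hAfin : A.Finite) (hs : s ∈ H)
    (ht : t ∈ AddSubgroup.closure T) : DownClosedAlong t H (compress s T A) := by
  intro x hx hxH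
  obtain ⟨g, hg, k, rfl, hk⟩ := mem_compress.mp hx
  have hgH : g ∉ H := fun hgH => hxH (add_mem hgH (nsmul_mem hs k))
  exact mem_compress.mpr ⟨g - t, sub_mem hg ht, k, by abel,
    hk.trans_le (ncard_cosetSlice_le_sub hA hAfin hs hgH)⟩

section CompressedCharacterization

variable {s : G} {T B : Set G} (hTs : Disjoint (AddSubgroup.closure T) (.zmultiples s))
  (hB : B.Finite) (hrep : ∀ x ∈ B, ∃ g ∈ AddSubgroup.closure T, ∃ k : ℕ, x = g + k • s)
  (hdown : DownClosedAlong s (.closure T) B)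
include hTs hB hrep hdown

theorem cosetSlice_eq_image_Iio {g : G} (hg : g ∈ AddSubgroup.closure T) :
    cosetSlice s B g = (fun k : ℕ => g + k • s) '' Set.Iio (cosetSlice s B g).ncard := by
  refine eq_image_Iio_ncard_of_sub_mem (hB.subset (cosetSlice_subset _ _ _))
    (fun x ⟨hxB, hxg⟩ => ?_) (fun x ⟨hxB, hxg⟩ hxg' => ⟨hdown x hxB fun hxH => hxg' ?_, ?_⟩)
  · obtain ⟨g', hg', k, rfl⟩ := hrep x hxB
    obtain rfl := eq_of_sub_mem_zmultiples hTs hg' hg (by simp) hxg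
    exact ⟨k, rfl⟩
  · exact eq_of_sub_mem_zmultiples hTs hxH hg (by simp) hxg
  · rw [sub_right_comm]
    exact sub_mem hxg (AddSubgroup.mem_zmultiples s)

theorem compress_eq_self_of_downClosedAlong : compress s T B = B := by
  ext x
  constructor
  · intro hx
    obtain ⟨g, hg, k, rfl, hk⟩ := mem_compress.mp hx
    have hmem : g + k • s ∈ cosetSlice s B g := by
      rw [cosetSlice_eq_image_Iio hTs hB hrep hdown hg]
      exact ⟨k, hk, rfl⟩
    exact hmem.1
  · intro hx
    obtain ⟨g, hg, k, rfl⟩ := hrep _ hx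
    have hmem : g + k • s ∈ cosetSlice s B g := ⟨hx, by simp⟩
    rw [cosetSlice_eq_image_Iio hTs hB hrep hdown hg] at hmem
    obtain ⟨j, hj, hjk⟩ := hmem
    exact mem_compress.mpr ⟨g, hg, j, hjk.symm, hj⟩

end CompressedCharacterization

end Compression

open Compression

theorem compress_preserves_compressed_general {G : Type*} [AddCommGroup G] [DecidableEq G]
    (S : Finset G) (hind : IsIndependent S)
    (A : Finset G) (si sj : G) (hi : si ∈ S) (hj : sj ∈ S)
    (hAi : compress si (↑(S.erase si)) (↑A : Set G) = (↑A : Set G)) :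
    compress si (↑(S.erase si)) (compress sj (↑(S.erase sj)) (↑A : Set G))
      = compress sj (↑(S.erase sj)) (↑A : Set G) := by
  obtain rfl | hij := eq_or_ne si sj
  · rw [hAi, hAi]
  have hsj : sj ∈ AddSubgroup.closure (↑(S.erase si) : Set G) :=
    AddSubgroup.subset_closure (Finset.mem_erase.mpr ⟨hij.symm, hj⟩)
  have hsi : si ∈ AddSubgroup.closure (↑(S.erase sj) : Set G) :=
    AddSubgroup.subset_closure (Finset.mem_erase.mpr ⟨hij, hi⟩)
  refine compress_eq_self_of_downClosedAlong (hind.disjoint_closure_erase hi)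
    (compress_finite (hind.disjoint_closure_erase hj) A.finite_toSet) (fun x hx => ?_)
    ((downClosedAlong_of_compress_eq_self hAi).compress A.finite_toSet hsj hsi)
  obtain ⟨a, ha, hxa⟩ := exists_sub_mem_zmultiples_of_mem_compress hx
  rw [← hAi] at ha
  obtain ⟨g, hg, k, rfl, -⟩ := mem_compress.mp ha
  exact ⟨g + (x - (g + k • si)), add_mem hg (AddSubgroup.zmultiples_le_of_mem hsj hxa), k, by abel⟩

/-- **Claim 2.1.** Let `S` be a finite independent generating subset of an abelian group
`G`, let `A ⊆ G` be finite, and let `sᵢ, sⱼ ∈ S`. If `A` is `i`-compressed (i.e.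
`[A]_i = A`), then so is the compression `[A]_j` of `A` along `sⱼ`. -/
theorem compress_preserves_compressed {G : Type*} [AddCommGroup G] [DecidableEq G]
    (S : Finset G) (hind : IsIndependent S)
    (hgen : AddSubgroup.closure (S : Set G) = ⊤)
    (A : Finset G) (si sj : G) (hi : si ∈ S) (hj : sj ∈ S)
    (hAi : compress si (↑(S.erase si)) (↑A : Set G) = (↑A : Set G)) :
    compress si (↑(S.erase si)) (compress sj (↑(S.erase sj)) (↑A : Set G))
      = compress sj (↑(S.erase sj)) (↑A : Set G) :=
  compress_preserves_compressed_general S hind A si sj hi hj hAi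
end

section
/- Let S = {s₁,…,sₙ} be a finite independent generating subset of an abelian group G, let A ⊆ G be finite, and let i, j ∈ [1,n]. Then |{a ∈ [A]_i : a + s_j ∉ [A]_i}| ≤ |{a ∈ A : a + s_j ∉ A}|. -/
/-!
Independence and generation make `G` the direct sum of `H = ⟨S ∖ {sᵢ}⟩` and `⟨sᵢ⟩`, so every
coset of `⟨sᵢ⟩` has a unique base point `g ∈ H`, and `[A]_i` meets the coset `g + ⟨sᵢ⟩` in the
segment `g, g + sᵢ, …, g + (m_g - 1)•sᵢ`, where `m_g = |A ∩ (g + ⟨sᵢ⟩)|`. Both boundaries are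
counted coset by coset.

If `sⱼ ∈ H`, translation by `sⱼ` sends the coset of `g` to the coset of `g + sⱼ`; the compressed
boundary in the coset of `g` has at most `m_g - m_{g+sⱼ}` elements, and at least that many
`a ∈ A ∩ (g + ⟨sᵢ⟩)` have `a + sⱼ ∉ A`, because `a ↦ a + sⱼ` injects the others into
`A ∩ (g + sⱼ + ⟨sᵢ⟩)`.

If `sⱼ = sᵢ`, only the last point of a segment can lie on the compressed boundary. If that point
does lie on it, then `A ∩ (g + ⟨sᵢ⟩)` has a boundary point too: otherwise this nonempty finite set
is closed under `+ sᵢ` and hence is the whole coset, so `m_g = addOrderOf sᵢ`, and the segment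
wraps around to `g`.
-/

open AddSubgroup Finset
open scoped Pointwise

section Complement

variable {G : Type*} [AddCommGroup G] {H K : AddSubgroup G}

theorem exists_mem_sub_mem_of_codisjoint (h : Codisjoint H K) (x : G) : ∃ g ∈ H, x - g ∈ K := by
  obtain ⟨y, hy, z, hz, rfl⟩ := mem_sup.mp (h.eq_top ▸ mem_top x)
  exact ⟨y, hy, by simpa using hz⟩

theorem eq_of_sub_mem_of_disjoint (h : Disjoint H K) {x g g' : G} (hg : g ∈ H) (hg' : g' ∈ H)
    (hx : x - g ∈ K) (hx' : x - g' ∈ K) : g = g' := by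
  exact sub_eq_zero.mp (disjoint_def.mp h (sub_mem hg hg') (by simpa using sub_mem hx' hx))

theorem card_eq_natCard_of_mem_iff_sub_mem {B : Finset G} {g : G}
    (hB : ∀ y, y ∈ B ↔ y - g ∈ K) : #B = Nat.card K := by
  rw [← Nat.card_eq_finsetCard]
  exact Nat.card_congr ((Equiv.subRight g).subtypeEquiv hB)

end Complement

theorem Finset.add_mem_of_forall_add_mem {G : Type*} [AddCommGroup G] [DecidableEq G]
    {B : Finset G} {s : G} (h : ∀ b ∈ B, b + s ∈ B) {b z : G} (hb : b ∈ B)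
    (hz : z ∈ zmultiples s) : b + z ∈ B := by
  have hs : s ∈ AddAction.stabilizer G B := by
    refine AddAction.mem_stabilizer_iff.mpr
      (eq_of_subset_of_card_le ?_ (card_vadd_finset s B).ge)
    rintro _ hx
    obtain ⟨y, hy, rfl⟩ := mem_vadd_finset.mp hx
    simpa [add_comm] using h y hy
  have hzB := AddAction.mem_stabilizer_iff.mp (zmultiples_le_of_mem hs hz)
  rw [add_comm, ← hzB]
  exact vadd_mem_vadd_finset hb

theorem Finset.natCard_subtype_mem_and {α : Type*} (A : Finset α) (p : α → Prop)
    [DecidablePred p] : Nat.card {a : α // a ∈ A ∧ p a} = #{a ∈ A | p a} := by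
  rw [← Nat.card_eq_finsetCard]
  exact Nat.card_congr (Equiv.subtypeEquivRight fun a => by simp)

section Compress

open scoped Classical

variable {G : Type*} [AddCommGroup G] {T : Set G} {s : G} {A C : Finset G}

theorem mem_compress_iff {x : G} :
    x ∈ compress s T A ↔
      ∃ g ∈ closure T, ∃ k < #{a ∈ A | a - g ∈ zmultiples s}, x = g + k • s := by
  simp only [compress, natCard_subtype_mem_and, Set.mem_iUnion,
    Set.mem_ofPred_eq, SetLike.mem_coe, exists_prop]
  exact exists_congr fun g => and_congr_right fun _ => exists_congr fun k => and_comm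

theorem mem_compress_iff_of_sub_mem (hT : Disjoint (closure T) (zmultiples s)) {x g : G}
    (hg : g ∈ closure T) (hx : x - g ∈ zmultiples s) :
    x ∈ compress s T A ↔ ∃ k < #{a ∈ A | a - g ∈ zmultiples s}, x = g + k • s := by
  rw [mem_compress_iff]
  constructor
  · rintro ⟨g', hg', k, hk, rfl⟩
    obtain rfl : g' = g := eq_of_sub_mem_of_disjoint hT hg' hg (by simp) hx
    exact ⟨k, hk, rfl⟩
  · rintro ⟨k, hk, rfl⟩
    exact ⟨g, hg, k, hk, rfl⟩

theorem finite_compress (hT : IsCompl (closure T) (zmultiples s)) (A : Finset G) :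
    (compress s T A).Finite := by
  choose π hπT hπs using exists_mem_sub_mem_of_codisjoint hT.codisjoint
  refine ((A ×ˢ range #A).finite_toSet.image fun p => π p.1 + p.2 • s).subset ?_
  intro x hx
  obtain ⟨g, hg, k, hk, rfl⟩ := mem_compress_iff.mp hx
  obtain ⟨a, ha⟩ := card_pos.mp (k.zero_le.trans_lt hk)
  rw [mem_filter] at ha
  have hπa : π a = g := eq_of_sub_mem_of_disjoint hT.disjoint (hπT a) hg (hπs a) ha.2
  exact ⟨(a, k), mem_product.mpr ⟨ha.1, mem_range.mpr (hk.trans_le (card_filter_le _ _))⟩,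
    by simp [hπa]⟩

theorem card_filter_sub_mem_le_add (A : Finset G) (K : AddSubgroup G) (g t : G) :
    #{a ∈ A | a - g ∈ K} ≤ #{a ∈ A | a + t ∉ A ∧ a - g ∈ K} + #{a ∈ A | a - (g + t) ∈ K} := by
  have hshift : #{a ∈ A | a + t ∈ A ∧ a - g ∈ K} ≤ #{a ∈ A | a - (g + t) ∈ K} := by
    refine card_le_card_of_injOn (· + t) (fun a ha => ?_) (fun a _ b _ => add_right_cancel)
    simp only [coe_filter, Set.mem_ofPred_eq] at ha ⊢
    exact ⟨ha.2.1, by simpa using ha.2.2⟩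
  have hsplit : #{a ∈ A | a + t ∈ A ∧ a - g ∈ K} + #{a ∈ A | a + t ∉ A ∧ a - g ∈ K} =
      #{a ∈ A | a - g ∈ K} := by
    rw [← card_filter_add_card_filter_not (s := {a ∈ A | a - g ∈ K}) (· + t ∈ A)]
    simp only [filter_filter, and_comm]
  omega

theorem card_boundary_fiber_compress_le_of_mem (hT : Disjoint (closure T) (zmultiples s))
    (hC : ↑C = compress s T A) {g t : G} (hg : g ∈ closure T) (ht : t ∈ closure T) :
    #{x ∈ C | x + t ∉ C ∧ x - g ∈ zmultiples s} ≤
      #{a ∈ A | a + t ∉ A ∧ a - g ∈ zmultiples s} := by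
  set m := fun y => #{a ∈ A | a - y ∈ zmultiples s}
  have hsub : {x ∈ C | x + t ∉ C ∧ x - g ∈ zmultiples s} ⊆
      (Ico (m (g + t)) (m g)).image (g + · • s) := by
    intro x hx
    rw [mem_filter] at hx
    obtain ⟨hxC, hxt, hxg⟩ := hx
    rw [← mem_coe, hC, mem_compress_iff_of_sub_mem hT hg hxg] at hxC
    obtain ⟨k, hk, rfl⟩ := hxC
    refine mem_image.mpr ⟨k, mem_Ico.mpr ⟨not_lt.mp fun hk' => hxt ?_, hk⟩, rfl⟩
    rw [← mem_coe, hC, add_right_comm]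
    exact mem_compress_iff.mpr ⟨g + t, add_mem hg ht, k, hk', rfl⟩
  calc #{x ∈ C | x + t ∉ C ∧ x - g ∈ zmultiples s}
      ≤ #(Ico (m (g + t)) (m g)) := (card_le_card hsub).trans card_image_le
    _ = m g - m (g + t) := Nat.card_Ico _ _
    _ ≤ _ := by have := card_filter_sub_mem_le_add A (zmultiples s) g t; simp only [m]; omega

theorem card_filter_sub_mem_nsmul_eq_zero {g : G} (hne : ∃ a ∈ A, a - g ∈ zmultiples s)
    (hclosed : ∀ a ∈ A, a - g ∈ zmultiples s → a + s ∈ A) :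
    #{a ∈ A | a - g ∈ zmultiples s} • s = 0 := by
  set B := {a ∈ A | a - g ∈ zmultiples s}
  have hB_add : ∀ b ∈ B, b + s ∈ B := by
    simp only [B, mem_filter]
    exact fun b ⟨hbA, hbg⟩ =>
      ⟨hclosed b hbA hbg, by simpa [add_sub_right_comm] using add_mem hbg (mem_zmultiples s)⟩
  obtain ⟨a₀, ha₀A, ha₀⟩ := hne
  have hB : ∀ y, y ∈ B ↔ y - g ∈ zmultiples s := fun y =>
    ⟨fun hy => (mem_filter.mp hy).2, fun hy => by
      simpa using add_mem_of_forall_add_mem hB_add (mem_filter.mpr ⟨ha₀A, ha₀⟩)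
        (z := y - a₀) (by simpa using sub_mem hy ha₀)⟩
  rw [card_eq_natCard_of_mem_iff_sub_mem hB, Nat.card_zmultiples, addOrderOf_nsmul_eq_zero]

theorem card_boundary_fiber_compress_le_self (hT : Disjoint (closure T) (zmultiples s))
    (hC : ↑C = compress s T A) {g : G} (hg : g ∈ closure T) :
    #{x ∈ C | x + s ∉ C ∧ x - g ∈ zmultiples s} ≤
      #{a ∈ A | a + s ∉ A ∧ a - g ∈ zmultiples s} := by
  set m := #{a ∈ A | a - g ∈ zmultiples s}
  have hcol : ∀ {x}, x - g ∈ zmultiples s → (x ∈ C ↔ ∃ k < m, x = g + k • s) := fun hx => by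
    rw [← mem_coe, hC, mem_compress_iff_of_sub_mem hT hg hx]
  have hmem : ∀ k < m, g + k • s ∈ C := fun k hk => (hcol (by simp)).mpr ⟨k, hk, rfl⟩
  have hlast : ∀ k < m, g + k • s + s ∉ C → k + 1 = m := by
    intro k hk hks
    by_contra hne
    exact hks (by rw [add_assoc, ← succ_nsmul]; exact hmem _ (by omega))
  obtain hempty | ⟨x, hx⟩ := ({x ∈ C | x + s ∉ C ∧ x - g ∈ zmultiples s}).eq_empty_or_nonempty
  · simp [hempty]
  have hsub : {x ∈ C | x + s ∉ C ∧ x - g ∈ zmultiples s} ⊆ {g + (m - 1) • s} := by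
    intro y hy
    obtain ⟨hyC, hys, hyg⟩ := mem_filter.mp hy
    obtain ⟨k, hk, rfl⟩ := (hcol hyg).mp hyC
    rw [mem_singleton, ← hlast k hk hys, Nat.add_sub_cancel]
  obtain ⟨hxC, hxs, hxg⟩ := mem_filter.mp hx
  obtain ⟨k, hk, rfl⟩ := (hcol hxg).mp hxC
  have hkm := hlast k hk hxs
  refine (card_le_card hsub).trans (card_pos.mpr ?_)
  by_contra hA
  have hclosed : ∀ a ∈ A, a - g ∈ zmultiples s → a + s ∈ A := fun a ha hag => by
    by_contra has
    exact hA ⟨a, mem_filter.mpr ⟨ha, has, hag⟩⟩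
  obtain ⟨a, ha⟩ := card_pos.mp (k.zero_le.trans_lt hk)
  have hm := card_filter_sub_mem_nsmul_eq_zero ⟨a, mem_filter.mp ha⟩ hclosed
  apply hxs
  rw [add_assoc, ← succ_nsmul, hkm, hm, add_zero]
  simpa using hmem 0 (k.zero_le.trans_lt hk)

theorem card_boundary_compress_le (hT : IsCompl (closure T) (zmultiples s)) (A : Finset G)
    {t : G} (ht : t ∈ closure T ∨ t = s) :
    Nat.card {x : G // x ∈ compress s T A ∧ x + t ∉ compress s T A} ≤
      Nat.card {a : G // a ∈ A ∧ a + t ∉ A} := by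
  choose π hπT hπs using exists_mem_sub_mem_of_codisjoint hT.codisjoint
  have hπ : ∀ {x g}, g ∈ closure T → (π x = g ↔ x - g ∈ zmultiples s) := fun hg =>
    ⟨fun h => h ▸ hπs _, eq_of_sub_mem_of_disjoint hT.disjoint (hπT _) hg (hπs _)⟩
  obtain ⟨C, hC⟩ := (finite_compress hT A).exists_finset_coe
  rw [← hC]
  simp only [mem_coe, natCard_subtype_mem_and]
  rw [card_eq_sum_card_fiberwise (f := π) (t := (C ∪ A).image π)
      (fun x hx => mem_image_of_mem π (mem_union_left A (mem_filter.mp hx).1)),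
    card_eq_sum_card_fiberwise (f := π) (t := (C ∪ A).image π)
      (fun x hx => mem_image_of_mem π (mem_union_right C (mem_filter.mp hx).1))]
  refine sum_le_sum fun g hg => ?_
  obtain ⟨y, -, rfl⟩ := mem_image.mp hg
  simp only [filter_filter, hπ (hπT y)]
  rcases ht with ht | rfl
  · exact card_boundary_fiber_compress_le_of_mem hT.disjoint hC (hπT y) ht
  · exact card_boundary_fiber_compress_le_self hT.disjoint hC (hπT y)

end Compress

theorem IsIndependent.isCompl_closure_erase {G : Type*} [AddCommGroup G] [DecidableEq G]
    {S : Finset G} (hind : IsIndependent S) (hgen : closure (S : Set G) = ⊤) {s : G}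
    (hs : s ∈ S) : IsCompl (closure (S.erase s : Set G)) (zmultiples s) := by
  refine ⟨disjoint_def.mpr fun {h} hh hhs => ?_, codisjoint_iff.mpr ?_⟩
  · obtain ⟨z, rfl⟩ := mem_zmultiples_iff.mp hhs
    rw [← Submodule.span_int_eq_addSubgroupClosure] at hh
    obtain ⟨f, -, hf⟩ := Submodule.mem_span_finset.mp hh
    have hsum : ∑ t ∈ S, Function.update f s (-z) t • t = 0 := by
      rw [← add_sum_erase S _ hs, Function.update_self,
        sum_congr rfl fun t ht => by rw [Function.update_of_ne (ne_of_mem_erase ht)], hf]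
      simp
    simpa using hind _ hsum s hs
  · rw [← hgen, zmultiples_eq_closure, ← AddSubgroup.closure_union, coe_erase,
      Set.sdiff_union_of_subset (Set.singleton_subset_iff.mpr hs)]

/-- **Claim 2.2 (first part).** Let `S` be a finite independent generating subset of an
abelian group `G`, let `A ⊆ G` be finite, and let `sᵢ, sⱼ ∈ S`. Then
`|{a ∈ [A]_i : a + sⱼ ∉ [A]_i}| ≤ |{a ∈ A : a + sⱼ ∉ A}|`. -/
theorem compress_boundary_single {G : Type*} [AddCommGroup G] [DecidableEq G]
    (S : Finset G) (hind : IsIndependent S)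
    (hgen : AddSubgroup.closure (S : Set G) = ⊤)
    (A : Finset G) (si sj : G) (hi : si ∈ S) (hj : sj ∈ S) :
    Nat.card {a : G // a ∈ compress si (↑(S.erase si)) (↑A : Set G) ∧
        a + sj ∉ compress si (↑(S.erase si)) (↑A : Set G)}
      ≤ Nat.card {a : G // a ∈ A ∧ a + sj ∉ A} := by
  refine card_boundary_compress_le (hind.isCompl_closure_erase hgen hi) A ?_
  by_cases h : sj = si
  · exact Or.inr h
  · exact Or.inl (subset_closure (mem_erase.mpr ⟨h, hj⟩))
end

section
/- Let S = {s₁,…,sₙ} be a finite independent generating subset of an abelian group G, let A ⊆ G be finite, and let i ∈ [1,n]. Then ∂_S([A]_i) ≤ ∂_S(A), where [A]_i is the compression of A along sᵢ. -/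
/-- The edge boundary `∂_S(A) = |{(a,s) ∈ A × S : a + s ∉ A}|` of a set `A` with respect
to a finite set `S`, in a form applicable to arbitrary sets `A`. -/
noncomputable def edgeBoundarySet {G : Type*} [AddCommGroup G] (A : Set G) (S : Finset G) : ℕ :=
  Nat.card {q : G × G // q.1 ∈ A ∧ q.2 ∈ S ∧ q.1 + q.2 ∉ A}

/-
Independence and generation make `⟨S ∖ {sᵢ}⟩` a complement of `⟨sᵢ⟩`, so the projection `r`
onto it along `⟨sᵢ⟩` labels the cosets of `⟨sᵢ⟩`, and `[A]ᵢ` meets the coset over `g` in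
`g, g + sᵢ, …, g + (c_g - 1) • sᵢ`, where `c_g = |A ∩ r⁻¹(g)|`. The edge boundary splits over
directions `t ∈ S` and cosets.
In direction `sᵢ` the compressed set leaves each coset at most once, and not at all when `A`
does not: then `A ∩ r⁻¹(g)` is closed under `+ sᵢ`, so `sᵢ` has order at most `c_g` and the
progression wraps around. In a direction `t ≠ sᵢ`, translation by `t` carries the coset over `g`
to the coset over `g + t`; there the compressed set has at most `c_g - c_{g+t}` boundary edges,
and `A` at least as many, since at most `c_{g+t}` of its points over `g` are moved into `A`.
-/

open Finset

theorem Finset.card_le_card_of_forall_card_fiber_le {α β : Type*} [DecidableEq β]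
    {s t : Finset α} (f : α → β)
    (h : ∀ y ∈ s.image f, #{a ∈ s | f a = y} ≤ #{a ∈ t | f a = y}) : #s ≤ #t :=
  calc #s = ∑ y ∈ s.image f, #{a ∈ s | f a = y} := card_eq_sum_card_image f s
    _ ≤ ∑ y ∈ s.image f, #{a ∈ t | f a = y} := sum_le_sum h
    _ = #{a ∈ t | f a ∈ s.image f} := sum_card_fiberwise_eq_card_filter _ _ _
    _ ≤ #t := card_filter_le _ _

namespace AddSubgroup

variable {G : Type*} [AddCommGroup G] {K L : AddSubgroup G}

noncomputable def projection (h : IsCompl K L) : G →+ G :=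
  (Submodule.projection _ _ (toIntSubmodule.isCompl h)).toAddMonoidHom

theorem projection_mem (h : IsCompl K L) (x : G) : projection h x ∈ K :=
  Submodule.projection_apply_mem (p := toIntSubmodule K) _ x

theorem projection_of_mem (h : IsCompl K L) {x : G} (hx : x ∈ K) : projection h x = x :=
  Submodule.projection_apply_of_mem_left (p := toIntSubmodule K) _ hx

theorem projection_projection (h : IsCompl K L) (x : G) :
    projection h (projection h x) = projection h x :=
  projection_of_mem h (projection_mem h x)

theorem projection_eq_zero_iff (h : IsCompl K L) {x : G} : projection h x = 0 ↔ x ∈ L :=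
  Submodule.projection_apply_eq_zero_iff (q := toIntSubmodule L) _

theorem projection_eq_projection_iff (h : IsCompl K L) {x y : G} :
    projection h x = projection h y ↔ x - y ∈ L := by
  rw [← projection_eq_zero_iff h, map_sub, sub_eq_zero]

theorem projection_add_of_mem_right (h : IsCompl K L) (x : G) {y : G} (hy : y ∈ L) :
    projection h (x + y) = projection h x := by
  rw [map_add, (projection_eq_zero_iff h).2 hy, add_zero]

theorem projection_add_of_mem_left (h : IsCompl K L) (x : G) {y : G} (hy : y ∈ K) :
    projection h (x + y) = projection h x + y := by
  rw [map_add, projection_of_mem h hy]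

end AddSubgroup

section

variable {G : Type*} [AddCommGroup G]

theorem IsIndependent.disjoint_closure_erase_zmultiples [DecidableEq G] {S : Finset G}
    (hind : IsIndependent S) {s : G} (hs : s ∈ S) :
    Disjoint (AddSubgroup.closure (S.erase s : Set G)) (AddSubgroup.zmultiples s) := by
  rw [AddSubgroup.disjoint_def]
  rintro x hxT ⟨z, rfl⟩
  rw [← Submodule.span_int_eq_addSubgroupClosure, Submodule.mem_toAddSubgroup] at hxT
  obtain ⟨f, -, hf⟩ := Submodule.mem_span_finset.1 hxT
  have hsum : ∑ t ∈ S, Function.update f s (-z) t • t = 0 := by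
    rw [← insert_erase hs, sum_insert (notMem_erase s S), Function.update_self,
      sum_congr rfl fun t ht => by rw [Function.update_of_ne (ne_of_mem_erase ht)], hf,
      neg_smul, neg_add_cancel]
  simpa using hind _ hsum s hs

theorem IsIndependent.isCompl_closure_erase_zmultiples [DecidableEq G] {S : Finset G}
    (hind : IsIndependent S) (hgen : AddSubgroup.closure (S : Set G) = ⊤) {s : G} (hs : s ∈ S) :
    IsCompl (AddSubgroup.closure (S.erase s : Set G)) (AddSubgroup.zmultiples s) := by
  refine ⟨hind.disjoint_closure_erase_zmultiples hs, codisjoint_iff.2 ?_⟩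
  rw [AddSubgroup.zmultiples_eq_closure, ← AddSubgroup.closure_union, ← hgen, coe_erase,
    Set.sdiff_union_self, Set.union_eq_left.2 (Set.singleton_subset_iff.2 hs)]

theorem edgeBoundarySet_coe [DecidableEq G] (A S : Finset G) :
    edgeBoundarySet (A : Set G) S = ∑ t ∈ S, #{a ∈ A | a + t ∉ A} := by
  have hcard : edgeBoundarySet (A : Set G) S = #{q ∈ A ×ˢ S | q.1 + q.2 ∉ A} := by
    rw [edgeBoundarySet, ← Nat.card_eq_finsetCard]
    exact Nat.card_congr (Equiv.subtypeEquivRight fun q => by simp [and_assoc])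
  rw [hcard, card_filter, sum_product_right]
  simp only [card_filter]

theorem addOrderOf_pos_and_le_card_of_add_mem {s : G} {F : Finset G}
    (hF : F.Nonempty) (hadd : ∀ a ∈ F, a + s ∈ F) :
    0 < addOrderOf s ∧ addOrderOf s ≤ #F := by
  obtain ⟨a, ha⟩ := hF
  have hmem : ∀ k : ℕ, a + k • s ∈ F := by
    intro k
    induction k with
    | zero => simpa using ha
    | succ k ih => simpa [succ_nsmul, add_assoc] using hadd _ ih
  obtain ⟨i, hi, j, hj, hij, heq⟩ := exists_ne_map_eq_of_card_lt_of_maps_to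
    (s := range (#F + 1)) (by simp) (f := fun k => a + k • s) fun k _ => hmem k
  wlog hlt : i < j generalizing i j
  · exact this j hj i hi hij.symm heq.symm (by omega)
  have hzero : (j - i) • s = 0 := by
    refine add_left_cancel (a := i • s) ?_
    rw [← add_nsmul, Nat.add_sub_cancel' hlt.le, add_zero]
    exact (add_left_cancel heq).symm
  have hpos : 0 < j - i := Nat.sub_pos_of_lt hlt
  refine ⟨(isOfFinAddOrder_iff_nsmul_eq_zero.2 ⟨_, hpos, hzero⟩).addOrderOf_pos,
    (addOrderOf_le_of_nsmul_eq_zero hpos hzero).trans ?_⟩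
  simp only [mem_range] at hi hj
  omega

theorem card_fiber_sub_card_fiber_add_le {G' : Type*} [DecidableEq G] [AddCommGroup G']
    [DecidableEq G'] (f : G →+ G') (A : Finset G) (t : G) (y : G') :
    #{a ∈ A | f a = y} - #{a ∈ A | f a = y + f t} ≤ #{a ∈ A | a + t ∉ A ∧ f a = y} := by
  have hsplit : #{a ∈ A | a + t ∉ A ∧ f a = y} + #{a ∈ A | a + t ∈ A ∧ f a = y}
      = #{a ∈ A | f a = y} := by
    rw [← card_filter_add_card_filter_not (s := {a ∈ A | f a = y}) (fun a => a + t ∉ A)]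
    simp only [filter_filter, not_not, and_comm]
  have htranslate : #{a ∈ A | a + t ∈ A ∧ f a = y} ≤ #{a ∈ A | f a = y + f t} :=
    card_le_card_of_injOn (· + t)
      (fun a ha => by simp_all)
      (fun a _ b _ hab => add_right_cancel hab)
  omega

section Compression

variable [DecidableEq G] {s : G} {K : AddSubgroup G} (h : IsCompl K (AddSubgroup.zmultiples s))
  (A : Finset G)

local notation "r" => AddSubgroup.projection h

noncomputable def compressFinset : Finset G :=
  (A.image r).biUnion fun g => (range #{a ∈ A | r a = g}).image (g + · • s)

variable {A} in
theorem mem_compressFinset {x : G} :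
    x ∈ compressFinset h A ↔ ∃ k < #{a ∈ A | r a = r x}, x = r x + k • s := by
  simp only [compressFinset, mem_biUnion, mem_image, mem_range]
  constructor
  · rintro ⟨_, ⟨a, -, rfl⟩, k, hk, rfl⟩
    rw [AddSubgroup.projection_add_of_mem_right h _ (AddSubgroup.nsmul_mem_zmultiples s k),
      AddSubgroup.projection_projection]
    exact ⟨k, hk, rfl⟩
  · rintro ⟨k, hk, hx⟩
    obtain ⟨a, ha⟩ := card_pos.1 (hk.trans_le' k.zero_le)
    rw [mem_filter] at ha
    exact ⟨r x, ⟨a, ha.1, ha.2⟩, k, hk, hx.symm⟩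

theorem card_subtype_sub_mem_zmultiples (g : G) :
    Nat.card {a : G // a ∈ A ∧ a - g ∈ AddSubgroup.zmultiples s}
      = #{a ∈ A | r a = r g} := by
  rw [← Nat.card_eq_finsetCard]
  exact Nat.card_congr (Equiv.subtypeEquivRight fun a => by
    simp [AddSubgroup.projection_eq_projection_iff h])

variable {A} in
theorem eq_of_mem_compressFinset_of_add_self_notMem {b : G} (hb : b ∈ compressFinset h A)
    (hbs : b + s ∉ compressFinset h A) : b = r b + (#{a ∈ A | r a = r b} - 1) • s := by
  obtain ⟨k, hk, hbk⟩ := (mem_compressFinset h).1 hb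
  suffices k + 1 = #{a ∈ A | r a = r b} by rwa [← this, Nat.add_sub_cancel]
  by_contra hne
  refine hbs ((mem_compressFinset h).2 ?_)
  rw [AddSubgroup.projection_add_of_mem_right h _ (AddSubgroup.mem_zmultiples s)]
  exact ⟨k + 1, by omega, by rw [succ_nsmul, ← add_assoc, ← hbk]⟩

theorem card_filter_add_self_notMem_compressFinset_fiber_le (g : G) :
    #{b ∈ compressFinset h A | b + s ∉ compressFinset h A ∧ r b = g}
      ≤ #{a ∈ A | a + s ∉ A ∧ r a = g} := by
  by_cases hA : {a ∈ A | a + s ∉ A ∧ r a = g}.Nonempty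
  · refine le_trans (card_le_one.2 fun b hb b' hb' => ?_) (card_pos.2 hA)
    simp only [mem_filter] at hb hb'
    rw [eq_of_mem_compressFinset_of_add_self_notMem h hb.1 hb.2.1,
      eq_of_mem_compressFinset_of_add_self_notMem h hb'.1 hb'.2.1, hb.2.2, hb'.2.2]
  rw [not_nonempty_iff_eq_empty, filter_eq_empty_iff] at hA
  refine (card_eq_zero.2 (filter_eq_empty_iff.2 ?_)).trans_le (Nat.zero_le _)
  rintro b hb ⟨hbs, rfl⟩
  obtain ⟨k, hk, hbk⟩ := (mem_compressFinset h).1 hb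
  have hr : r (b + s) = r b :=
    AddSubgroup.projection_add_of_mem_right h _ (AddSubgroup.mem_zmultiples s)
  obtain ⟨hpos, hle⟩ := addOrderOf_pos_and_le_card_of_add_mem (F := {a ∈ A | r a = r b})
    (card_pos.1 (k.zero_le.trans_lt hk)) fun a ha => by
      rw [mem_filter] at ha ⊢
      exact ⟨not_not.1 fun has => hA ha.1 ⟨has, ha.2⟩, by
        rw [AddSubgroup.projection_add_of_mem_right h _ (AddSubgroup.mem_zmultiples s), ha.2]⟩
  refine hbs ((mem_compressFinset h).2 ?_)
  rw [hr]
  refine ⟨(k + 1) % addOrderOf s, (Nat.mod_lt _ hpos).trans_le hle, ?_⟩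
  rw [mod_addOrderOf_nsmul, succ_nsmul, ← add_assoc, ← hbk]

theorem card_filter_add_notMem_compressFinset_fiber_le {t : G} (ht : t ∈ K) (g : G) :
    #{b ∈ compressFinset h A | b + t ∉ compressFinset h A ∧ r b = g}
      ≤ #{a ∈ A | r a = g} - #{a ∈ A | r a = g + t} := by
  calc _ ≤ #((Ico #{a ∈ A | r a = g + t} #{a ∈ A | r a = g}).image (g + · • s)) := by
        refine card_le_card fun b hb => ?_
        obtain ⟨hbB, hbt, rfl⟩ := mem_filter.1 hb
        obtain ⟨k, hk, hbk⟩ := (mem_compressFinset h).1 hbB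
        refine mem_image.2 ⟨k, mem_Ico.2 ⟨not_lt.1 fun hkt => hbt ?_, hk⟩, hbk.symm⟩
        refine (mem_compressFinset h).2 ?_
        rw [AddSubgroup.projection_add_of_mem_left h _ ht]
        exact ⟨k, hkt, by rw [add_right_comm, ← hbk]⟩
    _ ≤ _ := card_image_le.trans (Nat.card_Ico _ _).le

theorem card_filter_add_self_notMem_compressFinset_le :
    #{b ∈ compressFinset h A | b + s ∉ compressFinset h A} ≤ #{a ∈ A | a + s ∉ A} :=
  card_le_card_of_forall_card_fiber_le r fun g _ => by
    simpa only [filter_filter] using card_filter_add_self_notMem_compressFinset_fiber_le h A g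

theorem card_filter_add_notMem_compressFinset_le {t : G} (ht : t ∈ K) :
    #{b ∈ compressFinset h A | b + t ∉ compressFinset h A} ≤ #{a ∈ A | a + t ∉ A} :=
  card_le_card_of_forall_card_fiber_le r fun g _ => by
    simp only [filter_filter]
    calc _ ≤ _ := card_filter_add_notMem_compressFinset_fiber_le h A ht g
      _ ≤ _ := by
        simpa only [AddSubgroup.projection_of_mem h ht] using
          card_fiber_sub_card_fiber_add_le r A t g

end Compression

theorem coe_compressFinset [DecidableEq G] {s : G} {T : Set G}
    (h : IsCompl (AddSubgroup.closure T) (AddSubgroup.zmultiples s)) (A : Finset G) :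
    (compressFinset h A : Set G) = compress s T A := by
  ext x
  simp only [mem_compressFinset, compress, Set.mem_iUnion, Set.mem_ofPred_eq,
    SetLike.mem_coe, exists_prop]
  constructor
  · rintro ⟨k, hk, hx⟩
    refine ⟨AddSubgroup.projection h x, AddSubgroup.projection_mem h x, k, hx, ?_⟩
    rwa [card_subtype_sub_mem_zmultiples h, AddSubgroup.projection_projection]
  · rintro ⟨g, hg, k, rfl, hk⟩
    rw [card_subtype_sub_mem_zmultiples h, AddSubgroup.projection_of_mem h hg] at hk
    rw [AddSubgroup.projection_add_of_mem_right h _ (AddSubgroup.nsmul_mem_zmultiples s k),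
      AddSubgroup.projection_of_mem h hg]
    exact ⟨k, hk, rfl⟩

end

/-- **Claim 2.2 (second part).** Let `S` be a finite independent generating subset of an
abelian group `G`, let `A ⊆ G` be finite, and let `sᵢ ∈ S`. Then
`∂_S([A]_i) ≤ ∂_S(A)`, where `[A]_i` is the compression of `A` along `sᵢ`. -/
theorem compress_edgeBoundary_le {G : Type*} [AddCommGroup G] [DecidableEq G]
    (S : Finset G) (hind : IsIndependent S)
    (hgen : AddSubgroup.closure (S : Set G) = ⊤)
    (A : Finset G) (si : G) (hi : si ∈ S) :
    edgeBoundarySet (compress si (↑(S.erase si)) (↑A : Set G)) S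
      ≤ edgeBoundarySet (↑A : Set G) S := by
  have hcompl := hind.isCompl_closure_erase_zmultiples hgen hi
  rw [← coe_compressFinset hcompl, edgeBoundarySet_coe, edgeBoundarySet_coe]
  refine sum_le_sum fun t ht => ?_
  obtain rfl | hne := eq_or_ne t si
  · exact card_filter_add_self_notMem_compressFinset_le hcompl A
  · exact card_filter_add_notMem_compressFinset_le hcompl A
      (AddSubgroup.subset_closure (mem_erase.2 ⟨hne, ht⟩))
end

section
/- If n ≥ 1 is an integer and A ⊆ ℤ_{≥0}^n is a finite non-empty downset, then n·|A| ≤ |π₁(A)| + ⋯ + |πₙ(A)| + (1/2)·|A|·log₂|A|, where πᵢ denotes the projection of ℤ^n onto the i-th coordinate hyperplane (forgetting the i-th coordinate). -/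
/-!
For a downset `A`, the pairs `(a, i)` with `a ∈ A` and `aᵢ ≠ 0` are the edges `a - eᵢ ~ a` of the
grid inside `A`, and `πᵢ` maps the slice `{aᵢ = 0}` bijectively onto `πᵢ(A)`; hence
`∑ |πᵢ(A)| = n |A| - #edges`, and the claim is the edge-isoperimetric inequality
`2 #edges ≤ |A| log₂ |A|`. That is proved by induction on `|A|`, cutting `A` along a coordinate
`i` into the downsets `A₀ = {aᵢ = 0}` and `A₁ = {a : a + eᵢ ∈ A}` (the rest, shifted down). The
edges not inside a part join `A₁ ∩ {aᵢ = 0}` to `A₀`, so there are at most `min |A₀| |A₁|` of them,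
and `x log₂ x + y log₂ y + 2 min x y ≤ (x + y) log₂ (x + y)` is the bound `H(p) ≥ 2p` (`p ≤ 1/2`)
on binary entropy, which follows from its concavity.
-/

/-- The projection of `ℤ^{n+1}` onto the `i`-th coordinate hyperplane: it deletes the
`i`-th coordinate of a vector. -/
def proj {α : Type*} {n : ℕ} (i : Fin (n + 1)) (a : Fin (n + 1) → α) : Fin n → α :=
  fun j => a (i.succAbove j)

open Real Finset

lemma two_mul_mul_log_two_le_binEntropy_s13 {p : ℝ} (hp₀ : 0 ≤ p) (hp : p ≤ 2⁻¹) :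
    2 * p * log 2 ≤ binEntropy p := by
  have h := strictConcave_binEntropy.concaveOn.2 (x := 0) (y := 2⁻¹) (by simp)
    (by constructor <;> norm_num) (by linarith : 0 ≤ 1 - 2 * p) (by linarith : 0 ≤ 2 * p)
    (by ring)
  have hmid : (2 * p) • (2⁻¹ : ℝ) = p := by rw [smul_eq_mul]; ring
  rw [hmid, smul_zero, zero_add] at h
  simpa using h

lemma mul_logb_add_mul_logb_add_two_mul_le_s13 {x y e : ℝ} (hx : 0 < x) (hy : 0 < y)
    (hex : e ≤ x) (hey : e ≤ y) :
    x * logb 2 x + y * logb 2 y + 2 * e ≤ (x + y) * logb 2 (x + y) := by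
  wlog hyx : y ≤ x generalizing x y
  · linarith [add_comm x y ▸ this hy hx hey hex (le_of_not_ge hyx)]
  have hs : 0 < x + y := by linarith
  have hp : y / (x + y) ≤ 2⁻¹ := by rw [div_le_iff₀ hs]; linarith
  have hentropy : (x + y) * binEntropy (y / (x + y))
      = (x + y) * log (x + y) - x * log x - y * log y := by
    have h1 : 1 - y / (x + y) = x / (x + y) := by field_simp; ring
    rw [binEntropy, h1, inv_div, inv_div, log_div hs.ne' hy.ne', log_div hs.ne' hx.ne']
    field_simp
    ring
  have hH := mul_le_mul_of_nonneg_left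
    (two_mul_mul_log_two_le_binEntropy_s13 (div_nonneg hy.le hs.le) hp) hs.le
  rw [hentropy, show (x + y) * (2 * (y / (x + y)) * log 2) = 2 * y * log 2 by field_simp] at hH
  have hlog2 : 0 < log 2 := log_pos one_lt_two
  have he : 2 * e * log 2 ≤ 2 * y * log 2 := by gcongr
  have hdiff : (x + y) * logb 2 (x + y) - (x * logb 2 x + y * logb 2 y + 2 * e)
      = ((x + y) * log (x + y) - x * log x - y * log y - 2 * e * log 2) / log 2 := by
    simp only [logb]
    field_simp
    ring
  rw [← sub_nonneg, hdiff]
  exact div_nonneg (by linarith) hlog2.le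

section Downset

variable {ι : Type*}

lemma IsLowerSet.filter_eq_zero {A : Finset (ι → ℕ)} (hA : IsLowerSet (A : Set (ι → ℕ)))
    (i : ι) : IsLowerSet (({a ∈ A | a i = 0} : Finset (ι → ℕ)) : Set (ι → ℕ)) := by
  intro a b hba ha
  simp only [coe_filter, Set.mem_ofPred_eq] at ha ⊢
  exact ⟨hA hba ha.1, Nat.eq_zero_of_le_zero (ha.2 ▸ hba i)⟩

variable [DecidableEq ι] [Fintype ι]

lemma IsLowerSet.filter_add_single_mem {A : Finset (ι → ℕ)}
    (hA : IsLowerSet (A : Set (ι → ℕ))) (i : ι) :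
    IsLowerSet (({a ∈ A | a + Pi.single i 1 ∈ A} : Finset (ι → ℕ)) : Set (ι → ℕ)) := by
  intro a b hba ha
  simp only [coe_filter, Set.mem_ofPred_eq] at ha ⊢
  exact ⟨hA hba ha.1, hA (add_le_add hba le_rfl) ha.2⟩

lemma sum_filter_ne_zero_eq_sum_add_single {A : Finset (ι → ℕ)}
    (hA : IsLowerSet (A : Set (ι → ℕ))) (i : ι) {M : Type*} [AddCommMonoid M]
    (f : (ι → ℕ) → M) :
    ∑ a ∈ A with a i ≠ 0, f a = ∑ a ∈ A with a + Pi.single i 1 ∈ A, f (a + Pi.single i 1) := by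
  have hle : ∀ a : ι → ℕ, a i ≠ 0 → Pi.single i 1 ≤ a := fun a ha j => by
    rcases eq_or_ne j i with rfl | hj
    · simpa [Nat.one_le_iff_ne_zero]
    · simp [hj]
  refine sum_nbij' (· - Pi.single i 1) (· + Pi.single i 1) ?_ ?_ ?_ ?_ ?_
  · simp only [mem_filter]
    rintro a ⟨ha, hai⟩
    rw [tsub_add_cancel_of_le (hle a hai)]
    exact ⟨hA tsub_le_self ha, ha⟩
  · simp only [mem_filter]
    rintro a ⟨ha, ha'⟩
    exact ⟨ha', by simp⟩
  · intro a ha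
    exact tsub_add_cancel_of_le (hle a (mem_filter.1 ha).2)
  · intro a _
    exact add_tsub_cancel_right a _
  · intro a ha
    rw [tsub_add_cancel_of_le (hle a (mem_filter.1 ha).2)]

lemma card_filter_add_single_mem {A : Finset (ι → ℕ)} (hA : IsLowerSet (A : Set (ι → ℕ)))
    (i : ι) : #{a ∈ A | a + Pi.single i 1 ∈ A} = #{a ∈ A | a i ≠ 0} := by
  simpa only [card_eq_sum_ones] using
    (sum_filter_ne_zero_eq_sum_add_single hA i fun _ => 1).symm

def supportCount (A : Finset (ι → ℕ)) : ℕ := ∑ a ∈ A, #{i | a i ≠ 0}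

omit [DecidableEq ι] in
lemma sum_card_filter_eq_zero_add_supportCount (A : Finset (ι → ℕ)) :
    ∑ i, #{a ∈ A | a i = 0} + supportCount A = Fintype.card ι * #A := by
  simp only [supportCount, card_filter]
  rw [sum_comm, ← sum_add_distrib, ← card_univ, mul_comm, ← smul_eq_mul, ← sum_const]
  refine sum_congr rfl fun a _ => ?_
  simp only [← card_filter]
  exact card_filter_add_card_filter_not _

lemma card_support_add_single (a : ι → ℕ) (i : ι) :
    #{j | (a + Pi.single i 1 : ι → ℕ) j ≠ 0} = #{j | a j ≠ 0} + if a i = 0 then 1 else 0 := by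
  have h : ({j | (a + Pi.single i 1 : ι → ℕ) j ≠ 0} : Finset ι)
      = insert i ({j | a j ≠ 0} : Finset ι) := by
    ext j
    rcases eq_or_ne j i with rfl | hj <;> simp [*]
  rw [h]
  split_ifs with hi
  · rw [card_insert_of_notMem (by simp [hi])]
  · rw [insert_eq_of_mem (by simp [hi]), add_zero]

lemma supportCount_eq_add {A : Finset (ι → ℕ)} (hA : IsLowerSet (A : Set (ι → ℕ))) (i : ι) :
    supportCount A = supportCount {a ∈ A | a i = 0}
      + supportCount {a ∈ A | a + Pi.single i 1 ∈ A}
      + #{a ∈ {a ∈ A | a + Pi.single i 1 ∈ A} | a i = 0} := by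
  rw [supportCount, ← sum_filter_add_sum_filter_not A (· i = 0),
    sum_filter_ne_zero_eq_sum_add_single hA, add_assoc]
  simp only [card_support_add_single, sum_add_distrib, sum_boole]
  rfl

theorem two_mul_supportCount_le {A : Finset (ι → ℕ)} (hA : IsLowerSet (A : Set (ι → ℕ))) :
    2 * (supportCount A : ℝ) ≤ #A * logb 2 #A := by
  induction hN : #A using Nat.strong_induction_on generalizing A with
  | _ N ih =>
  subst hN
  by_cases hzero : ∀ a ∈ A, ∀ i, a i = 0
  · have : supportCount A = 0 := sum_eq_zero fun a ha => by simp [hzero a ha]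
    rw [this, Nat.cast_zero, mul_zero]
    exact mul_nonneg (Nat.cast_nonneg _)
      (div_nonneg (log_natCast_nonneg _) (log_nonneg one_le_two))
  push Not at hzero
  obtain ⟨a, ha, i, hai⟩ := hzero
  set A₀ := {a ∈ A | a i = 0}
  set A₁ := {a ∈ A | a + Pi.single i 1 ∈ A}
  set E := {a ∈ A₁ | a i = 0}
  have hcard : #A = #A₀ + #A₁ := by
    rw [card_filter_add_single_mem hA, card_filter_add_card_filter_not]
  have hA₀ : 0 < #A₀ := card_pos.2 ⟨0, mem_filter.2 ⟨hA (fun j => Nat.zero_le (a j)) ha, rfl⟩⟩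
  have hA₁ : 0 < #A₁ := by
    rw [card_filter_add_single_mem hA]
    exact card_pos.2 ⟨a, mem_filter.2 ⟨ha, hai⟩⟩
  have hE₀ : #E ≤ #A₀ := card_le_card (filter_subset_filter _ (filter_subset _ _))
  have hE₁ : #E ≤ #A₁ := card_filter_le _ _
  have ih₀ := ih #A₀ (by omega) (hA.filter_eq_zero i) rfl
  have ih₁ := ih #A₁ (by omega) (hA.filter_add_single_mem i) rfl
  have hsplit := mul_logb_add_mul_logb_add_two_mul_le_s13 (Nat.cast_pos.2 hA₀) (Nat.cast_pos.2 hA₁)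
    (Nat.cast_le.2 hE₀) (Nat.cast_le.2 hE₁)
  rw [supportCount_eq_add hA i, hcard]
  push_cast
  linarith

end Downset

lemma card_image_proj {n : ℕ} {A : Finset (Fin (n + 1) → ℕ)}
    (hA : IsLowerSet (A : Set (Fin (n + 1) → ℕ))) (i : Fin (n + 1)) :
    #(A.image (proj i)) = #{a ∈ A | a i = 0} := by
  refine card_nbij' (fun b : Fin n → ℕ => i.insertNth 0 b) (proj i) ?_ ?_ ?_ ?_
  · intro b hb
    obtain ⟨a, ha, rfl⟩ := mem_image.1 hb
    exact mem_filter.2 ⟨hA (Fin.insertNth_le_iff.2 ⟨Nat.zero_le _, le_rfl⟩) ha, by simp⟩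
  · intro a ha
    exact mem_image_of_mem _ (mem_filter.1 ha).1
  · rintro _ -
    exact Fin.removeNth_insertNth i 0 _
  · intro a ha
    rw [← (mem_filter.1 ha).2]
    exact Fin.insertNth_self_removeNth i a

theorem downset_projections_bound_general (n : ℕ) (A : Finset (Fin (n + 1) → ℕ))
    (hdown : ∀ a ∈ A, ∀ z : Fin (n + 1) → ℕ, (∀ i, z i ≤ a i) → z ∈ A) :
    ((n + 1 : ℕ) : ℝ) * A.card
      ≤ (∑ i : Fin (n + 1), ((A.image (proj i)).card : ℝ))
        + (1 / 2) * A.card * Real.logb 2 A.card := by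
  have hA : IsLowerSet (A : Set (Fin (n + 1) → ℕ)) := fun a z hz ha => hdown a ha z hz
  have hcount : ∑ i, (#{a ∈ A | a i = 0} : ℝ) + supportCount A = (n + 1 : ℕ) * #A := by
    exact_mod_cast Fintype.card_fin (n + 1) ▸ sum_card_filter_eq_zero_add_supportCount A
  simp only [card_image_proj hA]
  linarith [two_mul_supportCount_le hA]

/-- If `A ⊆ ℤ_{≥0}^n` (here with `n + 1 ≥ 1` coordinates) is a finite non-empty downset,
then `n·|A| ≤ |π₁(A)| + ⋯ + |πₙ(A)| + (1/2)·|A|·log₂ |A|`, where `πᵢ` is the projection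
onto the `i`-th coordinate hyperplane. -/
theorem downset_projections_bound (n : ℕ) (A : Finset (Fin (n + 1) → ℕ)) (hA : A.Nonempty)
    (hdown : ∀ a ∈ A, ∀ z : Fin (n + 1) → ℕ, (∀ i, z i ≤ a i) → z ∈ A) :
    ((n + 1 : ℕ) : ℝ) * A.card
      ≤ (∑ i : Fin (n + 1), ((A.image (proj i)).card : ℝ))
        + (1 / 2) * A.card * Real.logb 2 A.card :=
  downset_projections_bound_general n A hdown
end

section
/- If n ≥ 1 is an integer and A ⊆ ℤ^n is any finite non-empty set, then n·|A| ≤ |π₁(A)| + ⋯ + |πₙ(A)| + (1/2)·|A|·log₂|A|, where πᵢ denotes the projection of ℤ^n onto the i-th coordinate hyperplane (forgetting the i-th coordinate). -/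
lemma two_rpow_le_one_add {x : ℝ} (h0 : 0 ≤ x) (h1 : x ≤ 1) :
    (2:ℝ) ^ x ≤ 1 + x := by
  have h := convexOn_exp.2 (Set.mem_univ (0:ℝ)) (Set.mem_univ (Real.log 2))
    (by linarith : (0:ℝ) ≤ 1 - x) h0 (by ring)
  simp only [smul_eq_mul, mul_zero, zero_add, Real.exp_zero, Real.exp_log two_pos] at h
  calc (2:ℝ)^x = Real.exp (Real.log 2 * x) := by
        rw [Real.rpow_def_of_pos two_pos]
      _ ≤ (1-x)*1 + x*2 := by rw [mul_comm]; simpa using h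
      _ = 1 + x := by ring

lemma helper {a b : ℝ} (ha : 1 ≤ a) (hab : a ≤ b) :
    a + (1/2)*a*Real.logb 2 a + (1/2)*b*Real.logb 2 b
      ≤ (1/2)*(a+b)*Real.logb 2 (a+b) := by
  have hb : (1:ℝ) ≤ b := le_trans ha hab
  have ha0 : 0 < a := by linarith
  have hb0 : 0 < b := by linarith
  have h1 : a ≤ a * Real.logb 2 ((a+b)/a) := by
    have h2le : (2:ℝ) ≤ (a+b)/a := by
      rw [le_div_iff₀ ha0]; linarith
    have : (1:ℝ) ≤ Real.logb 2 ((a+b)/a) := by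
      rw [Real.le_logb_iff_rpow_le one_lt_two (by positivity)]
      simpa using h2le
    nlinarith
  have h2 : a ≤ b * Real.logb 2 ((a+b)/b) := by
    have hxb : a/b ≤ Real.logb 2 ((a+b)/b) := by
      rw [Real.le_logb_iff_rpow_le one_lt_two (by positivity)]
      have := two_rpow_le_one_add (x := a/b) (by positivity) (by rw [div_le_one hb0]; exact hab)
      calc (2:ℝ) ^ (a/b) ≤ 1 + a/b := this
        _ = (a+b)/b := by field_simp; ring
    calc a = b * (a/b) := by field_simp
      _ ≤ b * Real.logb 2 ((a+b)/b) := by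
          exact mul_le_mul_of_nonneg_left hxb (by linarith)
  have e1 : Real.logb 2 ((a+b)/a) = Real.logb 2 (a+b) - Real.logb 2 a :=
    Real.logb_div (by positivity) (by positivity)
  have e2 : Real.logb 2 ((a+b)/b) = Real.logb 2 (a+b) - Real.logb 2 b :=
    Real.logb_div (by positivity) (by positivity)
  rw [e1] at h1
  rw [e2] at h2
  nlinarith [h1, h2]

lemma helper2 {a b : ℝ} (ha : 1 ≤ a) (hb : 1 ≤ b) :
    min a b + (1/2)*a*Real.logb 2 a + (1/2)*b*Real.logb 2 b
      ≤ (1/2)*(a+b)*Real.logb 2 (a+b) := by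
  rcases le_total a b with h | h
  · rw [min_eq_left h]; exact helper ha h
  · rw [min_eq_right h]
    have := helper hb h
    rw [add_comm b a] at this
    linarith

lemma key (n : ℕ) : ∀ N (A : Finset (Fin (n+1) → ℤ)), A.card ≤ N → A.Nonempty →
    ((n + 1 : ℕ) : ℝ) * A.card
      ≤ (∑ i : Fin (n + 1), ((A.image (proj i)).card : ℝ))
        + (1 / 2) * A.card * Real.logb 2 A.card := by
  intro N
  induction N with
  | zero =>
    intro A hc hne
    have := Finset.card_pos.mpr hne; omega
  | succ N ih =>
    intro A hc hne
    rcases eq_or_lt_of_le (Finset.one_le_card.mpr hne) with h1 | h2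
    · -- card = 1
      obtain ⟨a, rfl⟩ := Finset.card_eq_one.mp h1.symm
      simp [Finset.image_singleton]
    · -- card ≥ 2
      obtain ⟨a, ha, b, hb, hab⟩ := Finset.one_lt_card.mp h2
      obtain ⟨i, hi⟩ := Function.ne_iff.mp hab
      set t : ℤ := min (a i) (b i) with ht
      set A₀ := A.filter (fun x => x i ≤ t) with hA₀
      set A₁ := A.filter (fun x => ¬ x i ≤ t) with hA₁
      have hsum : A₀.card + A₁.card = A.card :=
        Finset.card_filter_add_card_filter_not _
      have hne01 : A₀.Nonempty ∧ A₁.Nonempty := by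
        rcases le_total (a i) (b i) with h | h
        · have hlt : a i < b i := lt_of_le_of_ne h hi
          constructor
          · exact ⟨a, Finset.mem_filter.mpr ⟨ha, by simp [ht, min_eq_left h]⟩⟩
          · exact ⟨b, Finset.mem_filter.mpr ⟨hb, by simp [ht, min_eq_left h]; omega⟩⟩
        · have hlt : b i < a i := lt_of_le_of_ne h (Ne.symm hi)
          constructor
          · exact ⟨b, Finset.mem_filter.mpr ⟨hb, by simp [ht, min_eq_right h]⟩⟩
          · exact ⟨a, Finset.mem_filter.mpr ⟨ha, by simp [ht, min_eq_right h]; omega⟩⟩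
      obtain ⟨hne0, hne1⟩ := hne01
      have hc0 : 1 ≤ A₀.card := Finset.one_le_card.mpr hne0
      have hc1 : 1 ≤ A₁.card := Finset.one_le_card.mpr hne1
      -- images split
      have himg : ∀ j, A.image (proj j) = A₀.image (proj j) ∪ A₁.image (proj j) := by
        intro j
        rw [← Finset.image_union, Finset.filter_union_filter_not_eq]
      have hdisj : ∀ j, j ≠ i → Disjoint (A₀.image (proj j)) (A₁.image (proj j)) := by
        intro j hj
        rw [Finset.disjoint_left]
        rintro p hp hq
        obtain ⟨x, hx, rfl⟩ := Finset.mem_image.mp hp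
        obtain ⟨y, hy, hxy⟩ := Finset.mem_image.mp hq
        obtain ⟨k, hk⟩ := Fin.exists_succAbove_eq (Ne.symm hj)
        have hval : y (j.succAbove k) = x (j.succAbove k) := congrFun hxy k
        rw [hk] at hval
        have hx' := (Finset.mem_filter.mp hx).2
        have hy' := (Finset.mem_filter.mp hy).2
        omega
      -- per-coordinate card inequality
      have hper : ∀ j : Fin (n+1),
          (A₀.image (proj j)).card + (A₁.image (proj j)).card
            ≤ (A.image (proj j)).card + if j = i then min A₀.card A₁.card else 0 := by
        intro j
        by_cases hj : j = i
        · rw [if_pos hj, hj]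
          have h1 : (A₀.image (proj i)).card ≤ (A.image (proj i)).card :=
            Finset.card_le_card (by rw [himg i]; exact Finset.subset_union_left)
          have h2 : (A₁.image (proj i)).card ≤ (A.image (proj i)).card :=
            Finset.card_le_card (by rw [himg i]; exact Finset.subset_union_right)
          have h3 : (A₀.image (proj i)).card ≤ A₀.card := Finset.card_image_le
          have h4 : (A₁.image (proj i)).card ≤ A₁.card := Finset.card_image_le
          omega
        · rw [if_neg hj, add_zero, himg j, Finset.card_union_of_disjoint (hdisj j hj)]
      have hS : (∑ j : Fin (n+1), (A₀.image (proj j)).card)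
            + (∑ j : Fin (n+1), (A₁.image (proj j)).card)
          ≤ (∑ j : Fin (n+1), (A.image (proj j)).card) + min A₀.card A₁.card := by
        rw [← Finset.sum_add_distrib]
        calc ∑ j : Fin (n+1), ((A₀.image (proj j)).card + (A₁.image (proj j)).card)
            ≤ ∑ j : Fin (n+1), ((A.image (proj j)).card
                + if j = i then min A₀.card A₁.card else 0) :=
              Finset.sum_le_sum (fun j _ => hper j)
          _ = _ := by rw [Finset.sum_add_distrib, Finset.sum_ite_eq' Finset.univ i]; simp
      -- induction hypotheses
      have hlt0 : A₀.card ≤ N := by omega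
      have hlt1 : A₁.card ≤ N := by omega
      have I0 := ih A₀ hlt0 hne0
      have I1 := ih A₁ hlt1 hne1
      -- cast
      have hcast : (A₀.card : ℝ) + (A₁.card : ℝ) = (A.card : ℝ) := by
        exact_mod_cast congrArg (Nat.cast (R := ℝ)) hsum
      have hSr : (∑ j : Fin (n+1), ((A₀.image (proj j)).card : ℝ))
            + (∑ j : Fin (n+1), ((A₁.image (proj j)).card : ℝ))
          ≤ (∑ j : Fin (n+1), ((A.image (proj j)).card : ℝ))
            + min (A₀.card : ℝ) (A₁.card : ℝ) := by
        have := hS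
        rw [← Nat.cast_min]
        exact_mod_cast this
      have Hmin : min (A₀.card : ℝ) (A₁.card : ℝ)
            + (1/2)*(A₀.card : ℝ)*Real.logb 2 (A₀.card : ℝ)
            + (1/2)*(A₁.card : ℝ)*Real.logb 2 (A₁.card : ℝ)
          ≤ (1/2)*(A.card : ℝ)*Real.logb 2 (A.card : ℝ) := by
        have := helper2 (a := (A₀.card : ℝ)) (b := (A₁.card : ℝ))
          (by exact_mod_cast hc0) (by exact_mod_cast hc1)
        rwa [hcast] at this
      have hgoal' : ((n + 1 : ℕ) : ℝ) * A.card
          = ((n + 1 : ℕ) : ℝ) * A₀.card + ((n + 1 : ℕ) : ℝ) * A₁.card := by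
        rw [← hcast]; ring
      rw [hgoal']
      linarith [I0, I1, hSr, Hmin]

/-- If `A ⊆ ℤ^n` (here with `n + 1 ≥ 1` coordinates) is any finite non-empty set, then
`n·|A| ≤ |π₁(A)| + ⋯ + |πₙ(A)| + (1/2)·|A|·log₂ |A|`, where `πᵢ` is the projection onto
the `i`-th coordinate hyperplane. -/
theorem projections_bound (n : ℕ) (A : Finset (Fin (n + 1) → ℤ)) (hA : A.Nonempty) :
    ((n + 1 : ℕ) : ℝ) * A.card
      ≤ (∑ i : Fin (n + 1), ((A.image (proj i)).card : ℝ))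
        + (1 / 2) * A.card * Real.logb 2 A.card := by
  exact key n A.card A le_rfl hA
end

section
/- If n ≥ 1 is an integer and A ⊆ ℤ_{≥0}^n is a finite non-empty downset, then Σ_{a∈A} w(a) = n·|A| − (|π₁(A)| + ⋯ + |πₙ(A)|), where πᵢ denotes the projection of ℤ^n onto the i-th coordinate hyperplane (forgetting the i-th coordinate). -/
lemma image_card_eq (n : ℕ) (A : Finset (Fin (n + 1) → ℕ))
    (hdown : ∀ a ∈ A, ∀ z : Fin (n + 1) → ℕ, (∀ i, z i ≤ a i) → z ∈ A) (i : Fin (n + 1)) :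
    (A.image (proj i)).card = (A.filter (fun a => a i = 0)).card := by
  apply Finset.card_bij (fun b _ => Fin.insertNth (α := fun _ => ℕ) i 0 b)
  · intro b hb
    obtain ⟨a, ha, rfl⟩ := Finset.mem_image.mp hb
    refine Finset.mem_filter.mpr ⟨hdown a ha _ (fun j => ?_), Fin.insertNth_apply_same ..⟩
    induction j using i.succAboveCases with
    | x => simp
    | p k => simp [proj]
  · intro b hb b' hb' h
    funext j
    have := congrFun h (i.succAbove j)
    simpa using this
  · intro a ha
    obtain ⟨ha, hz⟩ := Finset.mem_filter.mp ha
    refine ⟨proj i a, Finset.mem_image_of_mem _ ha, ?_⟩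
    have h := Fin.insertNth_self_removeNth i a
    rw [hz] at h
    exact h

/-- If `A ⊆ ℤ_{≥0}^n` (here with `n + 1 ≥ 1` coordinates) is a finite non-empty downset,
then `∑_{a ∈ A} w(a) = n·|A| − (|π₁(A)| + ⋯ + |πₙ(A)|)`, where `w` is the weight and `πᵢ`
is the projection onto the `i`-th coordinate hyperplane. -/
theorem downset_weight_sum_eq (n : ℕ) (A : Finset (Fin (n + 1) → ℕ)) (hA : A.Nonempty)
    (hdown : ∀ a ∈ A, ∀ z : Fin (n + 1) → ℕ, (∀ i, z i ≤ a i) → z ∈ A) :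
    (∑ a ∈ A, (weight a : ℤ))
      = ((n + 1 : ℕ) : ℤ) * A.card - ∑ i : Fin (n + 1), ((A.image (proj i)).card : ℤ) := by
  have h1 : (∑ a ∈ A, (weight a : ℤ))
      = ∑ i : Fin (n + 1), ((A.filter (fun a => a i ≠ 0)).card : ℤ) := by
    simp only [weight, Finset.card_filter]
    push_cast
    rw [Finset.sum_comm]
  have h2 : ∀ i : Fin (n + 1),
      ((A.filter (fun a => a i ≠ 0)).card : ℤ)
        = A.card - ((A.image (proj i)).card : ℤ) := by
    intro i
    rw [image_card_eq n A hdown i]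
    have := Finset.card_filter_add_card_filter_not (s := A) (p := fun a => a i = 0)
    push_cast [← this]
    ring
  rw [h1]
  simp only [h2]
  rw [Finset.sum_sub_distrib]
  simp [mul_comm]
end
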